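/- arXiv:2605.03965 — 8 statements merged into one kernel-verified Lean document; each statement's English description precedes it below -/
import Mathlib

section
/- For every integer ℓ ≥ 2, every non-null {P₅, K_{ℓ,ℓ}}-free graph G has a vertex v such that α(G[N_G[v]]) < 2ℓ. -/
open SimpleGraph

/-- A set of vertices is independent (pairwise nonadjacent). -/
def IndepSet {V : Type*} (G : SimpleGraph V) (s : Set V) : Prop :=
  s.Pairwise fun a b => ¬ G.Adj a b

/-- The independence number of the subgraph of `G` induced by `S`. -/
noncomputable def indepNumOn {V : Type*} (G : SimpleGraph V) (S : Set V) : ℕ :=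
  sSup {n | ∃ s : Finset V, ↑s ⊆ S ∧ IndepSet G ↑s ∧ s.card = n}

/-- The independence number of `G`. -/
noncomputable def indepNum {V : Type*} (G : SimpleGraph V) : ℕ :=
  indepNumOn G Set.univ

/-- `G` contains no induced subgraph isomorphic to `H`. -/
def Free {W V : Type*} (H : SimpleGraph W) (G : SimpleGraph V) : Prop :=
  IsEmpty (H ↪g G)

/-- The closed neighborhood of a vertex. -/
def closedNbhd {V : Type*} (G : SimpleGraph V) (v : V) : Set V :=
  insert v (G.neighborSet v)

/-- A tree-decomposition of `G` with nodes indexed by `ι`: a tree `T` together with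
bags such that every vertex appears in a nonempty connected collection of bags and
every edge is contained in some bag. -/
structure TreeDecomp {V : Type*} (G : SimpleGraph V) (ι : Type*) where
  tree : SimpleGraph ι
  isTree : tree.IsTree
  bag : ι → Set V
  subtree : ∀ v : V, (tree.induce {t | v ∈ bag t}).Connected
  covers : ∀ ⦃u v : V⦄, G.Adj u v → ∃ t, u ∈ bag t ∧ v ∈ bag t

/-!
Let `S` be a maximum independent set, `v ∈ S`, and `I ⊆ N(v)` independent. For `A ⊆ S`, at most
`|A|` vertices of `I` have all their `S`-neighbours in `A`, since otherwise they could replace `A`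
in `S`. If `x, y ∈ I` had `S`-neighbours `s ≁ y` and `t ≁ x`, then `s x v y t` would be an induced
`P₅`; so the `S`-neighbourhoods of the vertices of `I` form a chain, and the vertices of `I` with an
`S`-neighbour outside `A` share one. Growing `A` from `∅` by such common neighbours gives `A ⊆ S`
with `|A| = ℓ` complete to at least `|I| - ℓ` vertices of `I`; if `|I| ≥ 2ℓ` this is an induced
`K_{ℓ,ℓ}`.
-/

open Finset

variable {V : Type*} {G : SimpleGraph V}

lemma SimpleGraph.IsIndepSet.not_adj {s : Set V} (hs : G.IsIndepSet s) {a b : V} (ha : a ∈ s)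
    (hb : b ∈ s) : ¬ G.Adj a b := by
  rcases eq_or_ne a b with rfl | hab
  · exact G.irrefl
  · exact hs ha hb hab

lemma indepNumOn_lt {S : Set V} {n : ℕ}
    (h : ∀ s : Finset V, ↑s ⊆ S → G.IsIndepSet ↑s → #s < n) : indepNumOn G S < n := by
  have hn : 0 < n := h ∅ (by simp) (by simp)
  have hbdd : indepNumOn G S ≤ n - 1 :=
    csSup_le ⟨0, ∅, by simp, by simp [IndepSet], rfl⟩ fun _ ⟨s, hsS, hs, hsm⟩ =>
      hsm ▸ Nat.le_sub_one_of_lt (h s hsS hs)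
  omega

lemma SimpleGraph.IsIndepSet.subset_singleton_of_subset_closedNbhd {s : Set V} {v : V}
    (hs : G.IsIndepSet s) (hsv : s ⊆ closedNbhd G v) (hv : v ∈ s) : s ⊆ {v} := by
  intro x hx
  rcases hsv hx with rfl | hvx
  · rfl
  · exact absurd hvx (hs.not_adj hv hx)

lemma SimpleGraph.IsIndepSet.disjoint_of_forall_adj {S I : Finset V} {v : V}
    (hS : G.IsIndepSet ↑S) (hv : v ∈ S) (hIv : ∀ x ∈ I, G.Adj v x) : Disjoint I S :=
  Finset.disjoint_left.mpr fun _ hx hxS => hS.not_adj hv hxS (hIv _ hx)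

lemma not_free_pathGraph_five {a b c d e : V}
    (hab : G.Adj a b) (hbc : G.Adj b c) (hcd : G.Adj c d) (hde : G.Adj d e)
    (hac : ¬ G.Adj a c) (had : ¬ G.Adj a d) (hae : ¬ G.Adj a e)
    (hbd : ¬ G.Adj b d) (hbe : ¬ G.Adj b e) (hce : ¬ G.Adj c e) :
    ¬ _root_.Free (pathGraph 5) G := by
  have hf : ∀ i j, G.Adj (![a, b, c, d, e] i) (![a, b, c, d, e] j) ↔ (pathGraph 5).Adj i j := by
    intro i j
    fin_cases i <;> fin_cases j <;>
      simp [pathGraph_adj, G.adj_comm, hab, hbc, hcd, hde, hac, had, hae, hbd, hbe, hce]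
  have hP : ∀ i j : Fin 5, (∀ k, (pathGraph 5).Adj k i ↔ (pathGraph 5).Adj k j) → i = j := by
    simp only [pathGraph_adj]; decide
  have hinj : Function.Injective ![a, b, c, d, e] := fun i j hij =>
    hP i j fun k => by rw [← hf, ← hf, hij]
  exact fun h => h.false ⟨⟨_, hinj⟩, hf _ _⟩

lemma not_free_completeBipartiteGraph [DecidableEq V] {m n : ℕ} {A B : Finset V}
    (hA : #A = m) (hB : #B = n) (hAind : G.IsIndepSet A) (hBind : G.IsIndepSet B)
    (hAB : ∀ a ∈ A, ∀ b ∈ B, G.Adj a b) :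
    ¬ _root_.Free (completeBipartiteGraph (Fin m) (Fin n)) G := by
  let f : Fin m → V := fun i => (A.equivFinOfCardEq hA).symm i
  let g : Fin n → V := fun j => (B.equivFinOfCardEq hB).symm j
  have hfA : ∀ i, f i ∈ A := fun i => ((A.equivFinOfCardEq hA).symm i).2
  have hgB : ∀ j, g j ∈ B := fun j => ((B.equivFinOfCardEq hB).symm j).2
  have hinj : Function.Injective (Sum.elim f g) :=
    (Subtype.val_injective.comp (Equiv.injective _)).sumElim
      (Subtype.val_injective.comp (Equiv.injective _))
      fun i j hij => G.irrefl (hij ▸ hAB _ (hfA i) _ (hgB j))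
  refine fun h => h.false ⟨⟨_, hinj⟩, ?_⟩
  rintro (i | i) (j | j)
  · simpa using hAind.not_adj (hfA i) (hfA j)
  · simpa using hAB _ (hfA i) _ (hgB j)
  · simpa using (hAB _ (hfA j) _ (hgB i)).symm
  · simpa using hBind.not_adj (hgB i) (hgB j)

lemma adj_or_adj_of_free_pathGraph_five (hP5 : _root_.Free (pathGraph 5) G) {S : Set V}
    (hS : G.IsIndepSet S) {v x y s t : V} (hv : v ∈ S) (hs : s ∈ S) (ht : t ∈ S)
    (hvx : G.Adj v x) (hvy : G.Adj v y) (hxy : ¬ G.Adj x y) (hxs : G.Adj x s)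
    (hyt : G.Adj y t) : G.Adj x t ∨ G.Adj y s := by
  by_contra! h
  exact not_free_pathGraph_five hxs.symm hvx.symm hvy hyt (hS.not_adj hs hv)
    (fun hsy => h.2 hsy.symm) (hS.not_adj hs ht) hxy h.1 (hS.not_adj hv ht) hP5

section Exchange

variable [DecidableEq V] [Finite V] {S A I : Finset V}

lemma SimpleGraph.IsMaximumIndepSet.card_le_of_forall_adj_mem {E : Finset V}
    (hS : G.IsMaximumIndepSet S) (hAS : A ⊆ S) (hE : G.IsIndepSet E) (hES : Disjoint E S)
    (hEA : ∀ x ∈ E, ∀ u ∈ S, G.Adj x u → u ∈ A) : #E ≤ #A := by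
  have hnA : ∀ a ∈ S \ A, ∀ x ∈ E, ¬ G.Adj x a := fun a ha x hx hxa =>
    (mem_sdiff.mp ha).2 (hEA x hx a (mem_sdiff.mp ha).1 hxa)
  have hU : G.IsIndepSet ↑(S \ A ∪ E) := by
    rw [coe_union, SimpleGraph.IsIndepSet, Set.pairwise_union]
    refine ⟨hS.isIndepSet.mono (coe_subset.mpr sdiff_subset), hE, fun a ha x hx _ => ?_⟩
    exact ⟨fun h => hnA a ha x hx h.symm, hnA a ha x hx⟩
  have hcard := hS.maximum _ hU
  rw [card_union_of_disjoint (hES.symm.mono_left sdiff_subset), card_sdiff_of_subset hAS]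
    at hcard
  have := card_le_card hAS
  omega

lemma SimpleGraph.IsMaximumIndepSet.card_sub_card_le_card_filter [DecidableRel G.Adj]
    (hS : G.IsMaximumIndepSet S) (hAS : A ⊆ S) (hI : G.IsIndepSet I) (hIS : Disjoint I S) :
    #I - #A ≤ #{x ∈ I | ∃ u ∈ S \ A, G.Adj x u} := by
  have hE : #{x ∈ I | ¬ ∃ u ∈ S \ A, G.Adj x u} ≤ #A :=
    hS.card_le_of_forall_adj_mem hAS (hI.mono (coe_subset.mpr (filter_subset _ _)))
      (hIS.mono_left (filter_subset _ _)) fun x hx u hu hxu => by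
        by_contra huA
        exact (mem_filter.mp hx).2 ⟨u, mem_sdiff.mpr ⟨hu, huA⟩, hxu⟩
  have := card_filter_add_card_filter_not (s := I) fun x => ∃ u ∈ S \ A, G.Adj x u
  omega

end Exchange

section Growth

variable [DecidableEq V] [DecidableRel G.Adj] {S A I : Finset V} {v : V}

lemma exists_mem_sdiff_forall_adj (hP5 : _root_.Free (pathGraph 5) G) (hS : G.IsIndepSet ↑S)
    (hv : v ∈ S) (hI : G.IsIndepSet ↑I) (hIv : ∀ x ∈ I, G.Adj v x)
    (hX : {x ∈ I | ∃ u ∈ S \ A, G.Adj x u}.Nonempty) :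
    ∃ t ∈ S \ A, ∀ x ∈ {x ∈ I | ∃ u ∈ S \ A, G.Adj x u}, G.Adj x t := by
  let F : V → Finset V := fun x => {u ∈ S \ A | G.Adj x u}
  obtain ⟨x₀, hx₀, hmin⟩ := exists_min_image _ (fun x => #(F x)) hX
  obtain ⟨t, ht, hx₀t⟩ := (mem_filter.mp hx₀).2
  refine ⟨t, ht, fun x hx => ?_⟩
  by_contra hxt
  have hFx : ¬ F x ⊆ F x₀ := fun h => by
    have htx : t ∈ F x := eq_of_subset_of_card_le h (hmin x hx) ▸ mem_filter.mpr ⟨ht, hx₀t⟩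
    exact hxt (mem_filter.mp htx).2
  obtain ⟨s, hsx, hsx₀⟩ := not_subset.mp hFx
  rw [mem_filter] at hsx hsx₀
  rcases adj_or_adj_of_free_pathGraph_five hP5 hS hv (sdiff_subset hsx.1) (sdiff_subset ht)
    (hIv x (mem_filter.mp hx).1) (hIv x₀ (mem_filter.mp hx₀).1)
    (hI.not_adj (mem_filter.mp hx).1 (mem_filter.mp hx₀).1) hsx.2 hx₀t with h | h
  · exact hxt h
  · exact hsx₀ ⟨hsx.1, h⟩

variable [Finite V]

lemma exists_subset_card_eq_forall_adj (hP5 : _root_.Free (pathGraph 5) G)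
    (hS : G.IsMaximumIndepSet S) (hv : v ∈ S) (hI : G.IsIndepSet ↑I)
    (hIv : ∀ x ∈ I, G.Adj v x) {k : ℕ} (hk : k ≤ #I) :
    ∃ A ⊆ S, #A = k ∧ ∀ x ∈ {x ∈ I | ∃ u ∈ S \ A, G.Adj x u}, ∀ a ∈ A, G.Adj x a := by
  induction k with
  | zero => exact ⟨∅, empty_subset _, card_empty, by simp⟩
  | succ k ih =>
    obtain ⟨A, hAS, hAk, hA⟩ := ih (by omega)
    have hX : {x ∈ I | ∃ u ∈ S \ A, G.Adj x u}.Nonempty := by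
      have := hS.card_sub_card_le_card_filter hAS hI (hS.isIndepSet.disjoint_of_forall_adj hv hIv)
      exact card_pos.mp (by omega)
    obtain ⟨t, ht, htX⟩ := exists_mem_sdiff_forall_adj hP5 hS.isIndepSet hv hI hIv hX
    rw [mem_sdiff] at ht
    refine ⟨insert t A, insert_subset ht.1 hAS, by rw [card_insert_of_notMem ht.2, hAk],
      fun x hx => ?_⟩
    obtain ⟨hxI, u, hu, hxu⟩ := mem_filter.mp hx
    have hxA : x ∈ {x ∈ I | ∃ u ∈ S \ A, G.Adj x u} :=
      mem_filter.mpr ⟨hxI, u, sdiff_subset_sdiff subset_rfl (subset_insert t A) hu, hxu⟩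
    exact forall_mem_insert _ _ _ |>.mpr ⟨htX x hxA, hA x hxA⟩

theorem card_lt_of_forall_adj {ℓ : ℕ} (hP5 : _root_.Free (pathGraph 5) G)
    (hK : _root_.Free (completeBipartiteGraph (Fin ℓ) (Fin ℓ)) G)
    (hS : G.IsMaximumIndepSet S) (hv : v ∈ S) (hI : G.IsIndepSet ↑I)
    (hIv : ∀ x ∈ I, G.Adj v x) : #I < 2 * ℓ := by
  by_contra! hIℓ
  obtain ⟨A, hAS, hAℓ, hA⟩ :=
    exists_subset_card_eq_forall_adj hP5 hS hv hI hIv (k := ℓ) (by omega)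
  have hX := hS.card_sub_card_le_card_filter hAS hI (hS.isIndepSet.disjoint_of_forall_adj hv hIv)
  obtain ⟨B, hBX, hBℓ⟩ :=
    exists_subset_card_eq (show ℓ ≤ #{x ∈ I | ∃ u ∈ S \ A, G.Adj x u} by omega)
  exact not_free_completeBipartiteGraph hAℓ hBℓ (hS.isIndepSet.mono (coe_subset.mpr hAS))
    (hI.mono (coe_subset.mpr (hBX.trans (filter_subset _ _))))
    (fun a ha b hb => (hA b (hBX hb) a ha).symm) hK

end Growth

/-- For every integer `ℓ ≥ 2`, every non-null `{P₅, K_{ℓ,ℓ}}`-free graph `G`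
has a vertex `v` such that `α(G[N_G[v]]) < 2ℓ`. -/
theorem stmt_1 (ℓ : ℕ) (hℓ : 2 ≤ ℓ) {V : Type} [Fintype V] [Nonempty V]
    (G : SimpleGraph V)
    (hP5 : _root_.Free (pathGraph 5) G)
    (hK : _root_.Free (completeBipartiteGraph (Fin ℓ) (Fin ℓ)) G) :
    ∃ v : V, indepNumOn G (closedNbhd G v) < 2 * ℓ := by
  classical
  obtain ⟨S, hS⟩ := G.maximumIndepSet_exists
  obtain ⟨v, hv⟩ : S.Nonempty :=
    card_pos.mp (lt_of_lt_of_le (by simp) (hS.maximum {Classical.arbitrary V} (by simp)))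
  refine ⟨v, indepNumOn_lt fun s hsv hs => ?_⟩
  by_cases hvs : v ∈ s
  · have hsv' : s ⊆ {v} := by exact_mod_cast hs.subset_singleton_of_subset_closedNbhd hsv hvs
    exact (card_le_card hsv').trans_lt (by rw [card_singleton]; omega)
  · exact card_lt_of_forall_adj hP5 hK hS hv hs fun x hx =>
      (hsv hx).resolve_left fun hxv => hvs (hxv ▸ hx)
end

section
/- Let ℓ ≥ 2 be an integer, let G be a {P₅, K_{ℓ,ℓ}}-free graph, and let I be a maximum independent set in G. Then α(G[N_G[v]]) < 2ℓ for every v ∈ I. -/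
open SimpleGraph

/-!
Suppose `S ⊆ N[v]` is independent with `|S| = 2ℓ`; then `S ⊆ N(v)` and `S` is disjoint from `I`.
The traces `N(s) ∩ I`, `s ∈ S`, form a chain under inclusion, for two incomparable traces would
yield an induced `P₅`. Let `T` consist of `ℓ` vertices of `S` with the smallest traces. As `I` is
maximum, trading `N(T) ∩ I` for `T` shows `|N(T) ∩ I| ≥ ℓ`, and each vertex of `S \ T` has a trace
containing all of `N(T) ∩ I`. Thus `S \ T` and `ℓ` vertices of `N(T) ∩ I` induce `K_{ℓ,ℓ}`.
-/

open Finset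

section IndependentSets

variable {V : Type*} {G : SimpleGraph V}

lemma IndepSet.not_adj {s : Set V} (hs : IndepSet G s) {x y : V} (hx : x ∈ s) (hy : y ∈ s) :
    ¬ G.Adj x y := by
  rintro hxy
  exact hs hx hy (G.ne_of_adj hxy) hxy

lemma IndepSet.mono {s t : Set V} (ht : IndepSet G t) (hst : s ⊆ t) : IndepSet G s :=
  Set.Pairwise.mono hst ht

lemma IndepSet.subset_neighborSet {s : Finset V} {v : V} (hs : IndepSet G s)
    (hsv : ↑s ⊆ closedNbhd G v) (hcard : #s ≠ 1) : ↑s ⊆ G.neighborSet v := by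
  intro x hx
  obtain rfl | hvx := hsv hx
  · obtain ⟨y, hy, hyx⟩ := s.exists_mem_ne (by have := card_pos.2 ⟨x, hx⟩; omega) x
    obtain rfl | hxy := hsv hy
    · exact (hyx rfl).elim
    · exact absurd hxy (hs.not_adj hx hy)
  · exact hvx

lemma IndepSet.notMem_of_adj {s : Set V} (hs : IndepSet G s) {v x : V} (hv : v ∈ s)
    (hvx : G.Adj v x) : x ∉ s :=
  fun hx => hs.not_adj hv hx hvx

variable [Fintype V]

lemma bddAbove_indepSet_card (G : SimpleGraph V) (S : Set V) :
    BddAbove {n | ∃ s : Finset V, ↑s ⊆ S ∧ IndepSet G ↑s ∧ #s = n} :=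
  ⟨Fintype.card V, by rintro n ⟨s, -, -, rfl⟩; exact s.card_le_univ⟩

lemma IndepSet.card_le_indepNum {s : Finset V} (hs : IndepSet G s) : #s ≤ _root_.indepNum G :=
  le_csSup (bddAbove_indepSet_card G Set.univ) ⟨s, Set.subset_univ _, hs, rfl⟩

lemma exists_indepSet_card_eq_of_le_indepNumOn {S : Set V} {n : ℕ}
    (hn : n ≤ indepNumOn G S) : ∃ s : Finset V, ↑s ⊆ S ∧ IndepSet G s ∧ #s = n := by
  obtain ⟨s, hsS, hs, hcard⟩ :=
    Nat.sSup_mem (s := {n | ∃ s : Finset V, ↑s ⊆ S ∧ IndepSet G ↑s ∧ #s = n})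
      ⟨0, ∅, by simp, by simp [IndepSet], rfl⟩ (bddAbove_indepSet_card G S)
  obtain ⟨t, hts, rfl⟩ := exists_subset_card_eq (hcard ▸ hn : n ≤ #s)
  exact ⟨t, (coe_subset.2 hts).trans hsS, hs.mono (coe_subset.2 hts), rfl⟩

/-- Exchanging `N(T) ∩ I` for `T` in a maximum independent set `I` cannot increase its size. -/
lemma IndepSet.card_le_card_filter_exists_adj [DecidableEq V] [DecidableRel G.Adj]
    {I T : Finset V} (hI : IndepSet G I) (hImax : #I = _root_.indepNum G) (hT : IndepSet G T)
    (hTI : Disjoint T I) : #T ≤ #{w ∈ I | ∃ t ∈ T, G.Adj t w} := by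
  set B := {w ∈ I | ∃ t ∈ T, G.Adj t w}
  have hJ : IndepSet G ↑(I \ B ∪ T) := by
    intro a ha b hb
    simp only [coe_union, coe_sdiff, Set.mem_union, Set.mem_sdiff, mem_coe, B, mem_filter,
      not_and, not_exists] at ha hb
    rcases ha with ⟨haI, haB⟩ | haT <;> rcases hb with ⟨hbI, hbB⟩ | hbT
    · exact hI haI hbI
    · exact fun _ hab => haB haI b hbT hab.symm
    · exact fun _ hab => hbB hbI a haT hab
    · exact hT haT hbT
  have hBI : B ⊆ I := filter_subset _ _
  have hcard := hJ.card_le_indepNum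
  rw [card_union_of_disjoint (disjoint_of_subset_left sdiff_subset hTI.symm),
    card_sdiff_of_subset hBI] at hcard
  have := card_le_card hBI
  omega

end IndependentSets

lemma Finset.exists_subset_card_eq_forall_le {α β : Type*} [DecidableEq α] [LinearOrder β]
    (f : α → β) {s : Finset α} {k : ℕ} (hk : k ≤ #s) :
    ∃ t ⊆ s, #t = k ∧ ∀ x ∈ t, ∀ y ∈ s \ t, f x ≤ f y := by
  induction k with
  | zero => exact ⟨∅, empty_subset _, rfl, by simp⟩
  | succ k ih =>
    obtain ⟨t, hts, htk, ht⟩ := ih (by omega)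
    have hne : (s \ t).Nonempty := by
      rw [← card_pos, card_sdiff_of_subset hts]; omega
    obtain ⟨m, hm, hmin⟩ := exists_min_image (s \ t) f hne
    refine ⟨insert m t, insert_subset (mem_sdiff.1 hm).1 hts,
      by rw [card_insert_of_notMem (mem_sdiff.1 hm).2, htk], ?_⟩
    intro x hx y hy
    have hy' : y ∈ s \ t :=
      mem_sdiff.2 ⟨(mem_sdiff.1 hy).1, fun h => (mem_sdiff.1 hy).2 (mem_insert_of_mem h)⟩
    obtain rfl | hx := mem_insert.1 hx
    · exact hmin y hy'
    · exact ht x hx y hy'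

lemma Finset.subset_of_subset_or_subset_of_card_le {α : Type*} {s t : Finset α}
    (h : s ⊆ t ∨ t ⊆ s) (hst : #s ≤ #t) : s ⊆ t := by
  rcases h with h | h
  · exact h
  · exact (eq_of_subset_of_card_le h hst).ge

section InducedSubgraphs

variable {V : Type*} {G : SimpleGraph V}

lemma pathGraph_five_isIndContained {a b c d e : V}
    (hab : G.Adj a b) (hbc : G.Adj b c) (hcd : G.Adj c d) (hde : G.Adj d e)
    (hac : ¬ G.Adj a c) (had : ¬ G.Adj a d) (hae : ¬ G.Adj a e)
    (hbd : ¬ G.Adj b d) (hbe : ¬ G.Adj b e) (hce : ¬ G.Adj c e)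
    (hac' : a ≠ c) (had' : a ≠ d) (hae' : a ≠ e)
    (hbd' : b ≠ d) (hbe' : b ≠ e) (hce' : c ≠ e) :
    pathGraph 5 ⊴ G := by
  have hab' := G.ne_of_adj hab
  have hbc' := G.ne_of_adj hbc
  have hcd' := G.ne_of_adj hcd
  have hde' := G.ne_of_adj hde
  refine ⟨⟨⟨![a, b, c, d, e], fun i j hij => ?_⟩, fun {i j} => ?_⟩⟩
  · fin_cases i <;> fin_cases j <;> simp_all [eq_comm]
  · change G.Adj (![a, b, c, d, e] i) (![a, b, c, d, e] j) ↔ _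
    fin_cases i <;> fin_cases j <;>
      simp [pathGraph_adj, hab, hbc, hcd, hde, hab.symm, hbc.symm, hcd.symm, hde.symm, hac, had,
        hae, hbd, hbe, hce, G.adj_comm _ a, G.adj_comm _ b, G.adj_comm _ c]

lemma completeBipartiteGraph_isIndContained {s t : Set V} (hs : IndepSet G s) (ht : IndepSet G t)
    (hst : G.IsCompleteBetween s t) : completeBipartiteGraph s t ⊴ G := by
  refine ⟨⟨⟨Sum.elim Subtype.val Subtype.val, Subtype.val_injective.sumElim
    Subtype.val_injective fun x y hxy => Set.disjoint_left.1 hst.disjoint x.2 (hxy ▸ y.2)⟩, ?_⟩⟩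
  rintro (x | x) (y | y)
  · simpa using hs.not_adj x.2 y.2
  · simpa using hst x.2 y.2
  · simpa using (hst y.2 x.2).symm
  · simpa using ht.not_adj x.2 y.2

lemma completeBipartiteGraph_fin_isIndContained {s t : Finset V} {n : ℕ} (hsn : #s = n)
    (htn : #t = n) (hs : IndepSet G s) (ht : IndepSet G t) (hst : G.IsCompleteBetween s t) :
    completeBipartiteGraph (Fin n) (Fin n) ⊴ G :=
  (completeBipartiteGraphCongr (s.equivFinOfCardEq hsn).symm
    (t.equivFinOfCardEq htn).symm).isIndContained.trans
    (completeBipartiteGraph_isIndContained hs ht hst)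

end InducedSubgraphs

/-- For nonadjacent neighbours `s, s'` of a vertex `v` of an independent set `I`, vertices
`w ∈ N(s) ∩ I \ N(s')` and `w' ∈ N(s') ∩ I \ N(s)` would span an induced path `w s v s' w'`. -/
lemma IndepSet.filter_adj_subset_or_subset {V : Type*} {G : SimpleGraph V} [DecidableRel G.Adj]
    {I : Finset V} (hI : IndepSet G I) (hP5 : _root_.Free (pathGraph 5) G) {v s s' : V} (hv : v ∈ I)
    (hs : G.Adj v s) (hs' : G.Adj v s') (hss' : ¬ G.Adj s s') :
    {w ∈ I | G.Adj s w} ⊆ {w ∈ I | G.Adj s' w} ∨ {w ∈ I | G.Adj s' w} ⊆ {w ∈ I | G.Adj s w} := by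
  by_contra! h
  obtain ⟨w, hw, hws'⟩ := not_subset.1 h.1
  obtain ⟨w', hw', hw's⟩ := not_subset.1 h.2
  simp only [mem_filter, not_and] at hw hws' hw' hw's
  refine hP5.false (pathGraph_five_isIndContained hw.2.symm hs.symm hs' hw'.2
    (hI.not_adj hw.1 hv) (fun h => hws' hw.1 h.symm) (hI.not_adj hw.1 hw'.1) hss'
    (hw's hw'.1) (hI.not_adj hv hw'.1) ?_ ?_ ?_ ?_ ?_ ?_).some
  · rintro rfl; exact hws' hw.1 hs'.symm
  · rintro rfl; exact hss' hw.2
  · rintro rfl; exact hw's hw.1 hw.2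
  · rintro rfl; exact hws' hw.1 hw.2
  · rintro rfl; exact hss' hw'.2.symm
  · rintro rfl; exact hw's hv hs.symm

theorem stmt_4_general (ℓ : ℕ) {V : Type} [Fintype V]
    (G : SimpleGraph V)
    (hP5 : _root_.Free (pathGraph 5) G)
    (hK : _root_.Free (completeBipartiteGraph (Fin ℓ) (Fin ℓ)) G)
    (I : Finset V) (hI : IndepSet G ↑I) (hImax : I.card = _root_.indepNum G) :
    ∀ v ∈ I, indepNumOn G (closedNbhd G v) < 2 * ℓ := by
  classical
  intro v hv
  by_contra! hcon
  obtain ⟨S, hSv, hS, hScard⟩ := exists_indepSet_card_eq_of_le_indepNumOn hcon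
  replace hSv := hS.subset_neighborSet hSv (by omega)
  let W : V → Finset V := fun s => {w ∈ I | G.Adj s w}
  obtain ⟨T, hTS, hTcard, hTX⟩ :=
    S.exists_subset_card_eq_forall_le (fun s => #(W s)) (k := ℓ) (by omega)
  have hWTX : ∀ t ∈ T, ∀ x ∈ S \ T, W t ⊆ W x := fun t ht x hx =>
    subset_of_subset_or_subset_of_card_le (hI.filter_adj_subset_or_subset hP5 hv
      (hSv (hTS ht)) (hSv (sdiff_subset hx)) (hS.not_adj (hTS ht) (sdiff_subset hx)))
      (hTX t ht x hx)
  have hTI : Disjoint T I :=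
    disjoint_left.2 fun t ht => hI.notMem_of_adj hv (hSv (hTS ht))
  obtain ⟨Y, hYB, hYcard⟩ := exists_subset_card_eq
    (hTcard ▸ hI.card_le_card_filter_exists_adj hImax (hS.mono (coe_subset.2 hTS)) hTI)
  refine hK.false (completeBipartiteGraph_fin_isIndContained (s := S \ T) (t := Y) ?_ hYcard
    (hS.mono (coe_subset.2 sdiff_subset)) (hI.mono (coe_subset.2 (hYB.trans (filter_subset _ _))))
    ?_).some
  · rw [card_sdiff_of_subset hTS]; omega
  · intro x hx y hy
    obtain ⟨hyI, t, ht, hty⟩ := mem_filter.1 (hYB hy)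
    exact (mem_filter.1 (hWTX t ht x hx (mem_filter.2 ⟨hyI, hty⟩))).2

/-- Let `ℓ ≥ 2` be an integer, `G` a `{P₅, K_{ℓ,ℓ}}`-free graph, and `I`
a maximum independent set in `G`. Then `α(G[N_G[v]]) < 2ℓ` for every `v ∈ I`. -/
theorem stmt_4 (ℓ : ℕ) (hℓ : 2 ≤ ℓ) {V : Type} [Fintype V]
    (G : SimpleGraph V)
    (hP5 : _root_.Free (pathGraph 5) G)
    (hK : _root_.Free (completeBipartiteGraph (Fin ℓ) (Fin ℓ)) G)
    (I : Finset V) (hI : IndepSet G ↑I) (hImax : I.card = _root_.indepNum G) :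
    ∀ v ∈ I, indepNumOn G (closedNbhd G v) < 2 * ℓ :=
  stmt_4_general ℓ G hP5 hK I hI hImax
end

section
/- Let d ≥ 2 be an integer and let 𝒢 be a hereditary graph class with d-dominated balanced separators. Then, for every integer ℓ ≥ 2, every K_{2,ℓ}-free graph G from 𝒢 with n ≥ 2 vertices has a vertex v such that α(G[N_G[v]]) ≤ dℓ·log₂ n. -/
/-!
Induction on the number of vertices, proving that some closed neighbourhood has independence
number at most `max 1 (dℓ · log₂ n)`. Let `X` be a dominated balanced separator. If some vertex
`v₀` is not dominated by `X`, recurse into the component `C` of `v₀` in `G - N[X]`, which has at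
most `n/2` vertices. If `N[X]` is everything, pick `x ∈ X` with `|N[x]| ≥ n/d` and recurse into
`V ∖ N[x]`, which has at most `(1 - 1/d) n` vertices; if that set is empty, `x` is universal, so
an independent set containing `x` is `{x}`, and we recurse into `G - x` instead.

The vertex `v` found by recursion is not in `N[y]` for the relevant dominating vertices `y`, and
by `K_{2,ℓ}`-freeness an independent set of common neighbours of `v` and `y` has fewer than `ℓ`
vertices. So the part of an independent set of `N[v]` outside the recursion has at most
`d(ℓ - 1)`, resp. `ℓ - 1`, vertices, which the drop of `log₂` by `1`, resp. by `1/d`, pays for.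
-/

open SimpleGraph

/-- The closed neighborhood of a set of vertices. -/
def closedNbhdSet {V : Type*} (G : SimpleGraph V) (X : Set V) : Set V :=
  ⋃ x ∈ X, closedNbhd G x

section IndepNum

variable {V W : Type*} {G : SimpleGraph V} {S T : Set V}

theorem indepNumOn_le {k : ℕ} (h : ∀ s : Finset V, ↑s ⊆ S → IndepSet G ↑s → s.card ≤ k) :
    indepNumOn G S ≤ k :=
  csSup_le ⟨0, ∅, by simp, by simp [IndepSet], rfl⟩ (by rintro _ ⟨s, hs, hi, rfl⟩; exact h s hs hi)

theorem card_le_indepNumOn [Finite V] {s : Finset V} (hs : ↑s ⊆ S) (hi : IndepSet G ↑s) :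
    s.card ≤ indepNumOn G S := by
  have := Fintype.ofFinite V
  exact le_csSup ⟨Fintype.card V, by rintro _ ⟨t, -, -, rfl⟩; exact t.card_le_univ⟩ ⟨s, hs, hi, rfl⟩

theorem indepNumOn_le_card [Finite V] : indepNumOn G S ≤ Nat.card V := by
  have := Fintype.ofFinite V
  exact indepNumOn_le fun s _ _ => Nat.card_eq_fintype_card (α := V) ▸ s.card_le_univ

theorem indepNumOn_mono [Finite V] (hST : S ⊆ T) : indepNumOn G S ≤ indepNumOn G T :=
  indepNumOn_le fun _ hs hi => card_le_indepNumOn (hs.trans hST) hi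

theorem indepNumOn_union_le [Finite V] :
    indepNumOn G (S ∪ T) ≤ indepNumOn G S + indepNumOn G T := by
  classical
  refine indepNumOn_le fun s hs hi => ?_
  rw [← s.card_filter_add_card_filter_not (· ∈ S)]
  refine add_le_add (card_le_indepNumOn (fun w hw => ?_) (hi.mono ?_))
    (card_le_indepNumOn (fun w hw => ?_) (hi.mono ?_))
  · exact (Finset.mem_filter.1 hw).2
  · exact_mod_cast s.filter_subset _
  · obtain ⟨hws, hwS⟩ := Finset.mem_filter.1 hw
    exact (hs hws).resolve_left hwS
  · exact_mod_cast s.filter_subset _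

theorem indepNumOn_empty : indepNumOn G ∅ = 0 :=
  Nat.le_zero.1 <| indepNumOn_le fun s hs _ => by simpa using Set.subset_empty_iff.1 hs

theorem indepNumOn_image_le [Finite W] {H : SimpleGraph W} (f : H ↪g G) (T : Set W) :
    indepNumOn G (f '' T) ≤ indepNumOn H T := by
  classical
  refine indepNumOn_le fun s hs hi => ?_
  obtain ⟨t, htT, rfl⟩ := Finset.subset_set_image_iff.1 hs
  rw [Finset.card_image_of_injective _ f.injective]
  refine card_le_indepNumOn htT fun a ha b hb hab hadj => ?_
  exact hi (Finset.mem_image_of_mem f ha) (Finset.mem_image_of_mem f hb)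
    (f.injective.ne hab) (f.map_adj_iff.2 hadj)

theorem indepNumOn_le_max_one_of_adj [Finite V] {x : V} (hx : ∀ w ∈ S, w ≠ x → G.Adj x w) :
    indepNumOn G S ≤ max 1 (indepNumOn G (S \ {x})) := by
  refine indepNumOn_le fun s hs hi => ?_
  by_cases hxs : x ∈ s
  · refine le_max_of_le_left (Finset.card_le_one.2 fun a ha b hb => ?_)
    have key : ∀ w ∈ s, w = x := fun w hw =>
      by_contra fun hwx => hi hxs hw (Ne.symm hwx) (hx w (hs hw) hwx)
    rw [key a ha, key b hb]
  · exact le_max_of_le_right (card_le_indepNumOn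
      (fun w hw => ⟨hs hw, fun h => hxs (Set.mem_singleton_iff.1 h ▸ hw)⟩) hi)

end IndepNum

theorem Free.of_embedding {U V W : Type*} {K : SimpleGraph U} {G : SimpleGraph V}
    {H : SimpleGraph W} (hK : _root_.Free K G) (f : H ↪g G) : _root_.Free K H :=
  ⟨fun e => hK.false (f.comp e)⟩

section CompleteBipartite

variable {α β V : Type*} {G : SimpleGraph V}

theorem isIndContained_completeBipartiteGraph (f : α ↪ V) (g : β ↪ V)
    (hf : ∀ i j, ¬ G.Adj (f i) (f j)) (hg : ∀ i j, ¬ G.Adj (g i) (g j))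
    (hfg : ∀ i j, G.Adj (f i) (g j)) : completeBipartiteGraph α β ⊴ G :=
  ⟨{ toFun := Sum.elim f g
     inj' := f.injective.sumElim g.injective fun i j => (hfg i j).ne
     map_rel_iff' := by
       rintro (i | i) (j | j) <;> simp [hf, hg, hfg, G.adj_comm (g _)] }⟩

theorem card_lt_of_free_completeBipartiteGraph {ℓ : ℕ}
    (hK : _root_.Free (completeBipartiteGraph (Fin 2) (Fin ℓ)) G) {a b : V} (hab : a ≠ b)
    (hnadj : ¬ G.Adj a b) {s : Finset V} (ha : ∀ w ∈ s, G.Adj a w) (hb : ∀ w ∈ s, G.Adj b w)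
    (hs : IndepSet G ↑s) : s.card < ℓ := by
  by_contra! hℓ
  obtain ⟨g⟩ : Nonempty (Fin ℓ ↪ s) :=
    Function.Embedding.nonempty_of_card_le (by simpa using hℓ)
  let g' : Fin ℓ ↪ V := g.trans (Function.Embedding.subtype _)
  have hg' : ∀ i j, ¬ G.Adj (g' i) (g' j) := fun i j hij =>
    hs (g i).2 (g j).2 hij.ne hij
  have hab' : ∀ i j : Fin 2, ¬ G.Adj (![a, b] i) (![a, b] j) := by
    simpa [Fin.forall_fin_two, G.adj_comm b a] using hnadj
  have hab'' : ∀ i j, G.Adj (![a, b] i) (g' j) := by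
    simpa [Fin.forall_fin_two, g'] using ⟨fun j => ha _ (g j).2, fun j => hb _ (g j).2⟩
  refine hK.false (isIndContained_completeBipartiteGraph ⟨![a, b], ?_⟩ g' hab' hg' hab'').some
  simp [Function.Injective, Fin.forall_fin_two, hab, hab.symm]

end CompleteBipartite

section ClosedNbhd

variable {V W : Type*} {G : SimpleGraph V} {H : SimpleGraph W}

theorem closedNbhd_inter_range_subset_image (f : H ↪g G) (v : W) :
    closedNbhd G (f v) ∩ Set.range f ⊆ f '' closedNbhd H v := by
  rintro _ ⟨hw, u, rfl⟩
  refine ⟨u, ?_, rfl⟩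
  rcases hw with h | h
  · exact .inl (f.injective h)
  · exact .inr (f.map_adj_iff.1 h)

theorem indepNumOn_closedNbhd_le_add [Finite V] (f : H ↪g G) (v : W) :
    indepNumOn G (closedNbhd G (f v)) ≤
      indepNumOn H (closedNbhd H v) + indepNumOn G (closedNbhd G (f v) \ Set.range f) := by
  have : Finite W := .of_injective f f.injective
  calc indepNumOn G (closedNbhd G (f v))
      = indepNumOn G (closedNbhd G (f v) ∩ Set.range f ∪ closedNbhd G (f v) \ Set.range f) := by
        rw [Set.inter_union_sdiff]
    _ ≤ indepNumOn G (closedNbhd G (f v) ∩ Set.range f) +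
          indepNumOn G (closedNbhd G (f v) \ Set.range f) := indepNumOn_union_le
    _ ≤ indepNumOn H (closedNbhd H v) + indepNumOn G (closedNbhd G (f v) \ Set.range f) :=
        add_le_add ((indepNumOn_mono (closedNbhd_inter_range_subset_image f v)).trans
          (indepNumOn_image_le f _)) le_rfl

theorem indepNumOn_closedNbhd_inter_le {ℓ : ℕ}
    (hK : _root_.Free (completeBipartiteGraph (Fin 2) (Fin ℓ)) G) {v x : V}
    (hv : v ∉ closedNbhd G x) : indepNumOn G (closedNbhd G v ∩ closedNbhd G x) ≤ ℓ - 1 := by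
  have hvx : v ≠ x := fun h => hv (.inl h)
  have hnadj : ¬ G.Adj v x := fun h => hv (.inr h.symm)
  have hadj : ∀ w ∈ closedNbhd G v ∩ closedNbhd G x, G.Adj v w ∧ G.Adj x w := by
    rintro w ⟨rfl | hwv, rfl | hwx⟩
    · exact absurd rfl hvx
    · exact absurd hwx.symm hnadj
    · exact absurd hwv hnadj
    · exact ⟨hwv, hwx⟩
  refine indepNumOn_le fun s hs hi => Nat.le_sub_one_of_lt ?_
  exact card_lt_of_free_completeBipartiteGraph hK hvx hnadj (fun w hw => (hadj w (hs hw)).1)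
    (fun w hw => (hadj w (hs hw)).2) hi

theorem closedNbhdSet_eq_biUnion_toFinset {X : Set V} (hX : X.Finite) :
    closedNbhdSet G X = ⋃ x ∈ hX.toFinset, closedNbhd G x := by
  simp only [closedNbhdSet, Set.Finite.mem_toFinset]

theorem indepNumOn_closedNbhd_inter_closedNbhdSet_le [Finite V] {ℓ : ℕ}
    (hK : _root_.Free (completeBipartiteGraph (Fin 2) (Fin ℓ)) G) {v : V} {X : Set V}
    (hv : v ∉ closedNbhdSet G X) :
    indepNumOn G (closedNbhd G v ∩ closedNbhdSet G X) ≤ X.ncard * (ℓ - 1) := by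
  have hX := Set.toFinite X
  have hunion : closedNbhd G v ∩ closedNbhdSet G X =
      ⋃ x ∈ hX.toFinset, closedNbhd G v ∩ closedNbhd G x := by
    rw [closedNbhdSet_eq_biUnion_toFinset hX, Set.inter_iUnion₂]
  calc indepNumOn G (closedNbhd G v ∩ closedNbhdSet G X)
      ≤ ∑ x ∈ hX.toFinset, indepNumOn G (closedNbhd G v ∩ closedNbhd G x) :=
        hunion ▸ Finset.apply_union_le_sum indepNumOn_empty indepNumOn_union_le _
    _ ≤ ∑ _x ∈ hX.toFinset, (ℓ - 1) := Finset.sum_le_sum fun x hx =>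
        indepNumOn_closedNbhd_inter_le hK fun h =>
          hv (Set.mem_biUnion (hX.mem_toFinset.1 hx) h)
    _ = X.ncard * (ℓ - 1) := by rw [Finset.sum_const, smul_eq_mul, Set.ncard_eq_toFinset_card]

theorem exists_card_le_ncard_mul_ncard_closedNbhd [Finite V] [Nonempty V] {X : Set V}
    (hX : closedNbhdSet G X = Set.univ) :
    ∃ x ∈ X, Nat.card V ≤ X.ncard * (closedNbhd G x).ncard := by
  have hXf := X.toFinite
  obtain ⟨x, hx, -⟩ := Set.mem_iUnion₂.1
    (hX ▸ Set.mem_univ (Classical.arbitrary V) : Classical.arbitrary V ∈ closedNbhdSet G X)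
  obtain ⟨x₀, hx₀, hmax⟩ :=
    Set.exists_max_image X (fun x => (closedNbhd G x).ncard) hXf ⟨x, hx⟩
  refine ⟨x₀, hx₀, ?_⟩
  calc Nat.card V = (closedNbhdSet G X).ncard := by rw [hX, Set.ncard_univ]
    _ ≤ ∑ x ∈ hXf.toFinset, (closedNbhd G x).ncard := by
        rw [closedNbhdSet_eq_biUnion_toFinset hXf]
        exact Finset.set_ncard_biUnion_le _ _
    _ ≤ hXf.toFinset.card * (closedNbhd G x₀).ncard :=
        Finset.sum_le_card_nsmul _ _ _ fun x hx => hmax x (hXf.mem_toFinset.1 hx)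
    _ = X.ncard * (closedNbhd G x₀).ncard := by rw [Set.ncard_eq_toFinset_card X hXf]

variable (G) in
def componentEmbedding (R : Set V) (v₀ : R) :
    (G.induce R).induce {w | (G.induce R).Reachable v₀ w} ↪g G :=
  (Embedding.induce R).comp (Embedding.induce _)

theorem closedNbhd_diff_range_componentEmbedding_subset (R : Set V) (v₀ : R)
    (v : {w | (G.induce R).Reachable v₀ w}) :
    closedNbhd G (componentEmbedding G R v₀ v) \ Set.range (componentEmbedding G R v₀) ⊆ Rᶜ := by
  rintro w ⟨hw, hwf⟩ hwR
  refine hwf ⟨⟨⟨w, hwR⟩, v.2.trans ?_⟩, rfl⟩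
  rcases hw with h | h
  · subst h; exact .rfl
  · exact (show (G.induce R).Adj v.1 ⟨w, hwR⟩ from h).reachable

end ClosedNbhd

section Numerics

open Real

theorem max_one_add_le_max_one {u v c : ℝ} (hu : 0 ≤ u) (h : u + c + 1 ≤ v) :
    max 1 u + c ≤ max 1 v := by
  rw [← max_add_add_right]
  exact le_max_of_le_right (max_le (by linarith) (by linarith))

theorem logb_two_le_sub_one {x : ℝ} (hx₀ : 0 < x) (hx₁ : x ≤ 1) : logb 2 x ≤ x - 1 := by
  have hlog2 : 0 < log 2 := log_pos one_lt_two
  have hlog2' : log 2 < 1 := log_two_lt_d9.trans (by norm_num)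
  have hlogx : log x ≤ 0 := log_nonpos hx₀.le hx₁
  calc logb 2 x = log x / log 2 := rfl
    _ ≤ log x := by rw [div_le_iff₀ hlog2]; nlinarith
    _ ≤ x - 1 := log_le_sub_one_of_pos hx₀

theorem logb_two_add_one_le {x y : ℝ} (hx : 0 < x) (h : 2 * x ≤ y) :
    logb 2 x + 1 ≤ logb 2 y :=
  calc logb 2 x + 1 = logb 2 (2 * x) := by
        rw [logb_mul two_ne_zero hx.ne', logb_self_eq_one one_lt_two]; ring
    _ ≤ logb 2 y := logb_le_logb_of_le one_lt_two (by positivity) h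

theorem mul_logb_two_add_one_le {d m n : ℝ} (hd : 0 < d) (hm : 0 < m) (hn : 0 < n)
    (h : d * m ≤ (d - 1) * n) : d * logb 2 m + 1 ≤ d * logb 2 n := by
  have hratio : d * (m / n) ≤ d - 1 := by rw [mul_div_assoc', div_le_iff₀ hn]; linarith
  have hlog := logb_two_le_sub_one (div_pos hm hn) (by nlinarith : m / n ≤ 1)
  rw [logb_div hm.ne' hn.ne'] at hlog
  nlinarith

end Numerics

section LocalIndepBound

open Real

variable {V : Type*} {G : SimpleGraph V}

/-- The `max 1` makes the bound true for one-vertex graphs too, where the induction bottoms out. -/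
def HasLocalIndepBound (a : ℝ) (G : SimpleGraph V) : Prop :=
  ∃ v, (indepNumOn G (closedNbhd G v) : ℝ) ≤ max 1 (a * logb 2 (Nat.card V))

theorem hasLocalIndepBound_of_card_le_one [Finite V] [Nonempty V] (a : ℝ)
    (h : Nat.card V ≤ 1) : HasLocalIndepBound a G :=
  ⟨Classical.arbitrary V, le_max_of_le_left (by exact_mod_cast indepNumOn_le_card.trans h)⟩

theorem HasLocalIndepBound.of_forall_adj [Finite V] {a : ℝ} (ha : 0 ≤ a) {x : V}
    (hx : ∀ w, w ≠ x → G.Adj x w) (h : HasLocalIndepBound a (G.induce {x}ᶜ)) :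
    HasLocalIndepBound a G := by
  obtain ⟨v, hv⟩ := h
  let f : G.induce {x}ᶜ ↪g G := Embedding.induce _
  have hsub : closedNbhd G v \ {x} ⊆ closedNbhd G (f v) ∩ Set.range f :=
    fun w hw => ⟨hw.1, ⟨w, hw.2⟩, rfl⟩
  have hindep : indepNumOn G (closedNbhd G v) ≤
      max 1 (indepNumOn (G.induce {x}ᶜ) (closedNbhd _ v)) :=
    (indepNumOn_le_max_one_of_adj fun w _ hw => hx w hw).trans <| max_le_max le_rfl <|
      (indepNumOn_mono (hsub.trans (closedNbhd_inter_range_subset_image f v))).trans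
        (indepNumOn_image_le f _)
  have hcard : 0 < Nat.card ({x}ᶜ : Set V) := Nat.card_pos_iff.2 ⟨⟨v⟩, inferInstance⟩
  have hcard' : Nat.card ({x}ᶜ : Set V) ≤ Nat.card V :=
    Nat.card_le_card_of_injective _ Subtype.val_injective
  refine ⟨v, ?_⟩
  calc (indepNumOn G (closedNbhd G v) : ℝ)
      ≤ max 1 (indepNumOn (G.induce {x}ᶜ) (closedNbhd _ v) : ℝ) := by exact_mod_cast hindep
    _ ≤ max 1 (a * logb 2 (Nat.card ({x}ᶜ : Set V))) := max_le (le_max_left _ _) hv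
    _ ≤ max 1 (a * logb 2 (Nat.card V)) := by
        gcongr
        exact one_lt_two

theorem HasLocalIndepBound.of_component [Finite V] {d ℓ : ℕ} (hd : 1 ≤ d) (hℓ : 1 ≤ ℓ)
    (hK : _root_.Free (completeBipartiteGraph (Fin 2) (Fin ℓ)) G) {X : Set V}
    (hX : X.ncard ≤ d) (v₀ : ↥(closedNbhdSet G X)ᶜ)
    (hsmall : 2 * {w | (G.induce (closedNbhdSet G X)ᶜ).Reachable v₀ w}.ncard ≤ Nat.card V)
    (h : HasLocalIndepBound (d * ℓ) ((G.induce (closedNbhdSet G X)ᶜ).induce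
      {w | (G.induce (closedNbhdSet G X)ᶜ).Reachable v₀ w})) :
    HasLocalIndepBound (d * ℓ) G := by
  obtain ⟨v, hv⟩ := h
  set f := componentEmbedding G _ v₀
  have hsub : closedNbhd G (f v) \ Set.range f ⊆ closedNbhd G (f v) ∩ closedNbhdSet G X :=
    fun w hw => ⟨hw.1, not_not.1 (closedNbhd_diff_range_componentEmbedding_subset _ v₀ v hw)⟩
  have hout : indepNumOn G (closedNbhd G (f v) \ Set.range f) ≤ d * (ℓ - 1) :=
    (indepNumOn_mono hsub).trans <|
      (indepNumOn_closedNbhd_inter_closedNbhdSet_le hK v.1.2).trans (Nat.mul_le_mul_right _ hX)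
  set c := Nat.card {w | (G.induce (closedNbhdSet G X)ᶜ).Reachable v₀ w}
  have hc₀ : 0 < c := Nat.card_pos_iff.2 ⟨⟨v⟩, inferInstance⟩
  have hc : 1 ≤ (c : ℝ) := by exact_mod_cast hc₀
  have hlog : logb 2 c + 1 ≤ logb 2 (Nat.card V) :=
    logb_two_add_one_le (by linarith) (by exact_mod_cast hsmall)
  have hdℓ : (0 : ℝ) ≤ d * ℓ := by positivity
  have hdR : (1 : ℝ) ≤ d := by exact_mod_cast hd
  refine ⟨f v, ?_⟩
  calc (indepNumOn G (closedNbhd G (f v)) : ℝ)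
      ≤ indepNumOn _ (closedNbhd _ v) + ((d * (ℓ - 1) : ℕ) : ℝ) := by
        exact_mod_cast (indepNumOn_closedNbhd_le_add f v).trans (add_le_add le_rfl hout)
    _ ≤ max 1 (d * ℓ * logb 2 c) + d * (ℓ - 1) := by
        rw [Nat.cast_mul, Nat.cast_sub hℓ, Nat.cast_one]
        exact add_le_add hv le_rfl
    _ ≤ max 1 (d * ℓ * logb 2 (Nat.card V)) := by
        refine max_one_add_le_max_one (mul_nonneg hdℓ (logb_nonneg one_lt_two hc)) ?_
        nlinarith [mul_le_mul_of_nonneg_left hlog hdℓ]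

theorem HasLocalIndepBound.of_compl_closedNbhd [Finite V] {d ℓ : ℕ} (hℓ : 1 ≤ ℓ)
    (hK : _root_.Free (completeBipartiteGraph (Fin 2) (Fin ℓ)) G) {x : V}
    (hcard : Nat.card V ≤ d * (closedNbhd G x).ncard)
    (h : HasLocalIndepBound (d * ℓ) (G.induce (closedNbhd G x)ᶜ)) :
    HasLocalIndepBound (d * ℓ) G := by
  obtain ⟨v, hv⟩ := h
  let f : G.induce (closedNbhd G x)ᶜ ↪g G := Embedding.induce _
  have hsub : closedNbhd G (f v) \ Set.range f ⊆ closedNbhd G (f v) ∩ closedNbhd G x :=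
    fun w hw => ⟨hw.1, by_contra fun hwx => hw.2 ⟨⟨w, hwx⟩, rfl⟩⟩
  have hout : indepNumOn G (closedNbhd G (f v) \ Set.range f) ≤ ℓ - 1 :=
    (indepNumOn_mono hsub).trans (indepNumOn_closedNbhd_inter_le hK v.2)
  have hsum : (closedNbhd G x).ncard + Nat.card ↥(closedNbhd G x)ᶜ = Nat.card V :=
    Set.ncard_add_ncard_compl _
  have hm : 0 < Nat.card ↥(closedNbhd G x)ᶜ := Nat.card_pos_iff.2 ⟨⟨v⟩, inferInstance⟩
  set m := Nat.card ↥(closedNbhd G x)ᶜ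
  have hdm : (0 : ℝ) < d := by
    have : 0 < d * (closedNbhd G x).ncard := by omega
    exact_mod_cast Nat.pos_of_mul_pos_right this
  have hsumR : ((closedNbhd G x).ncard : ℝ) + m = Nat.card V := by exact_mod_cast hsum
  have hcardR : (Nat.card V : ℝ) ≤ d * (closedNbhd G x).ncard := by exact_mod_cast hcard
  have hlog : d * logb 2 m + 1 ≤ d * logb 2 (Nat.card V) :=
    mul_logb_two_add_one_le hdm (by exact_mod_cast hm) (by exact_mod_cast hm.trans_le (by omega))
      (by nlinarith)
  have hℓR : (1 : ℝ) ≤ ℓ := by exact_mod_cast hℓ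
  refine ⟨f v, ?_⟩
  calc (indepNumOn G (closedNbhd G (f v)) : ℝ)
      ≤ indepNumOn _ (closedNbhd _ v) + ((ℓ - 1 : ℕ) : ℝ) := by
        exact_mod_cast (indepNumOn_closedNbhd_le_add f v).trans (add_le_add le_rfl hout)
    _ ≤ max 1 (d * ℓ * logb 2 m) + (ℓ - 1) := by
        rw [Nat.cast_sub hℓ, Nat.cast_one]
        exact add_le_add hv le_rfl
    _ ≤ max 1 (d * ℓ * logb 2 (Nat.card V)) := by
        refine max_one_add_le_max_one (mul_nonneg (by positivity)
          (logb_nonneg one_lt_two (by exact_mod_cast hm))) ?_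
        nlinarith [mul_le_mul_of_nonneg_left hlog (by linarith : (0 : ℝ) ≤ ℓ)]

end LocalIndepBound

section GraphClass

def IsHereditary (𝒢 : ∀ V : Type, SimpleGraph V → Prop) : Prop :=
  ∀ (V : Type) (G : SimpleGraph V) (S : Set V), 𝒢 V G → 𝒢 S (G.induce S)

def HasDominatedBalancedSeparators (d : ℕ) (𝒢 : ∀ V : Type, SimpleGraph V → Prop) : Prop :=
  ∀ (V : Type) [Fintype V] (G : SimpleGraph V), 𝒢 V G →
    ∃ X : Set V, X.ncard ≤ d ∧
      ∀ v : ↥(closedNbhdSet G X)ᶜ,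
        2 * {w : ↥(closedNbhdSet G X)ᶜ |
              (G.induce (closedNbhdSet G X)ᶜ).Reachable v w}.ncard ≤ Fintype.card V

theorem hasLocalIndepBound_of_mem {d ℓ : ℕ} (hd : 1 ≤ d) (hℓ : 1 ≤ ℓ)
    {𝒢 : ∀ V : Type, SimpleGraph V → Prop} (hhered : IsHereditary 𝒢)
    (hsep : HasDominatedBalancedSeparators d 𝒢) (V : Type) [Finite V] [Nonempty V]
    (G : SimpleGraph V) (hG : 𝒢 V G)
    (hK : _root_.Free (completeBipartiteGraph (Fin 2) (Fin ℓ)) G) :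
    HasLocalIndepBound (d * ℓ) G := by
  induction hn : Nat.card V using Nat.strong_induction_on generalizing V with
  | _ n IH =>
  subst hn
  obtain ⟨X, hXd, hXsep⟩ := @hsep V (Fintype.ofFinite V) G hG
  rcases (closedNbhdSet G X)ᶜ.eq_empty_or_nonempty with hR | ⟨v₀, hv₀⟩
  · obtain ⟨x, -, hcard⟩ := exists_card_le_ncard_mul_ncard_closedNbhd (Set.compl_empty_iff.1 hR)
    rcases (closedNbhd G x)ᶜ.eq_empty_or_nonempty with hW | ⟨w, hw⟩
    · have hx : ∀ w, w ≠ x → G.Adj x w := fun w hw =>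
        (Set.compl_empty_iff.1 hW ▸ Set.mem_univ w : w ∈ closedNbhd G x).resolve_left hw
      rcases le_or_gt (Nat.card V) 1 with h1 | h1
      · exact hasLocalIndepBound_of_card_le_one _ h1
      have := Finite.one_lt_card_iff_nontrivial.1 h1
      obtain ⟨w, hw⟩ := exists_ne x
      have : Nonempty ↥({x}ᶜ : Set V) := ⟨⟨w, hw⟩⟩
      exact .of_forall_adj (by positivity) hx <|
        IH _ (Set.ncard_lt_card (Set.ne_univ_iff_exists_notMem _ |>.2 ⟨x, by simp⟩)) _ _
          (hhered _ _ _ hG) (hK.of_embedding (Embedding.induce _)) rfl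
    · have : Nonempty ↥(closedNbhd G x)ᶜ := ⟨⟨w, hw⟩⟩
      exact .of_compl_closedNbhd hℓ hK (hcard.trans (Nat.mul_le_mul_right _ hXd)) <|
        IH _ (Set.ncard_lt_card (Set.ne_univ_iff_exists_notMem _ |>.2
            ⟨x, not_not.2 (Set.mem_insert x _)⟩)) _ _
          (hhered _ _ _ hG) (hK.of_embedding (Embedding.induce _)) rfl
  · let v : ↥(closedNbhdSet G X)ᶜ := ⟨v₀, hv₀⟩
    have hsmall := (hXsep v).trans_eq Fintype.card_eq_nat_card
    have : Nonempty {w | (G.induce (closedNbhdSet G X)ᶜ).Reachable v w} := ⟨⟨v, .rfl⟩⟩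
    have hpos : 0 < Nat.card {w | (G.induce (closedNbhdSet G X)ᶜ).Reachable v w} := Nat.card_pos
    exact .of_component hd hℓ hK hXd v hsmall <|
      IH _ (by rw [Nat.card_coe_set_eq] at hpos ⊢; omega) _ _ (hhered _ _ _ (hhered _ _ _ hG))
        (hK.of_embedding (componentEmbedding G _ v)) rfl

end GraphClass

/-- Let `d ≥ 2` and let `𝒢` be a hereditary graph class with `d`-dominated
balanced separators. Then for every `ℓ ≥ 2`, every `K_{2,ℓ}`-free graph `G ∈ 𝒢` with
`n ≥ 2` vertices has a vertex `v` with `α(G[N_G[v]]) ≤ dℓ·log₂ n`. -/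
theorem stmt_5 (d : ℕ) (hd : 2 ≤ d)
    (𝒢 : ∀ V : Type, SimpleGraph V → Prop)
    (hhered : ∀ (V : Type) (G : SimpleGraph V) (S : Set V),
      𝒢 V G → 𝒢 S (G.induce S))
    (hsep : ∀ (V : Type) [Fintype V] (G : SimpleGraph V), 𝒢 V G →
      ∃ X : Set V, X.ncard ≤ d ∧
        ∀ v : ↥(closedNbhdSet G X)ᶜ,
          2 * {w : ↥(closedNbhdSet G X)ᶜ |
                (G.induce (closedNbhdSet G X)ᶜ).Reachable v w}.ncard ≤ Fintype.card V)
    (ℓ : ℕ) (hℓ : 2 ≤ ℓ)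
    (V : Type) [Fintype V] (G : SimpleGraph V) (hG : 𝒢 V G)
    (hK : _root_.Free (completeBipartiteGraph (Fin 2) (Fin ℓ)) G)
    (hn : 2 ≤ Fintype.card V) :
    ∃ v : V, (indepNumOn G (closedNbhd G v) : ℝ) ≤
      d * ℓ * Real.logb 2 (Fintype.card V) := by
  have : Nonempty V := Fintype.card_pos_iff.1 (by omega)
  obtain ⟨v, hv⟩ := hasLocalIndepBound_of_mem (by omega) (by omega) hhered hsep V G hG hK
  rw [Nat.card_eq_fintype_card] at hv
  refine ⟨v, hv.trans_eq (max_eq_right ?_)⟩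
  have hlog : 1 ≤ Real.logb 2 (Fintype.card V) := by
    rw [Real.le_logb_iff_rpow_le one_lt_two (by positivity)]
    simpa using (show (2 : ℝ) ≤ Fintype.card V by exact_mod_cast hn)
  have hdℓ : (1 : ℝ) ≤ d * ℓ := by
    have : 1 ≤ d * ℓ := Nat.one_le_iff_ne_zero.2 (by positivity)
    exact_mod_cast this
  nlinarith
end

section
/- For every graph G, the α-degeneracy of G is at most its tree-independence number. Equivalently: if k is the tree-independence number of G, then every non-null induced subgraph H of G contains a vertex v with α(H[N_H[v]]) ≤ k. -/
/-!
Root the decomposition tree at a node `r` and let `top v` be the node of the subtree of `v`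
nearest to `r`. Pick `v ∈ S` whose `top v` is farthest from `r`. If `u ∈ S` is a neighbour of
`v`, take a node `s` whose bag contains both. The path from `r` to `s` runs through `top u` and
then stays inside the subtree of `u`, and it also passes through `top v`, which is at least as
far from `r` as `top u`. So `top v` lies in the subtree of `u`, and the bag at `top v` contains
the whole closed neighbourhood of `v` in `G[S]`.
-/

open SimpleGraph

namespace SimpleGraph

variable {V : Type*} {G : SimpleGraph V}

lemma Walk.IsPath.append {u v w : V} {p : G.Walk u v} {q : G.Walk v w}
    (hp : p.IsPath) (hq : q.IsPath) (h : ∀ x ∈ p.support, x ∈ q.support → x = v) :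
    (p.append q).IsPath := by
  rw [Walk.isPath_def, Walk.support_append]
  have hq' := hq.support_nodup
  rw [← q.cons_tail_support, List.nodup_cons] at hq'
  refine hp.support_nodup.append hq'.2 fun x hxp hxq => ?_
  obtain rfl := h x hxp (List.mem_of_mem_tail hxq)
  exact hq'.1 hxq

lemma Walk.mem_support_of_append_eq_append {u v x y : V} {p₁ : G.Walk u x} {q₁ : G.Walk x v}
    {p₂ : G.Walk u y} {q₂ : G.Walk y v} (h : p₁.append q₁ = p₂.append q₂)
    (hlen : p₂.length ≤ p₁.length) : x ∈ q₂.support := by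
  have hx : (p₂.append q₂).getVert p₁.length = x := by
    rw [← h, Walk.getVert_append']
    simp
  rw [Walk.getVert_append, if_neg (by omega)] at hx
  exact hx ▸ q₂.getVert_mem_support _

lemma Walk.eq_of_length_eq_dist_of_mem_support [DecidableEq V] {u v y : V} {p : G.Walk u v}
    (hp : p.length = G.dist u v) (hy : y ∈ p.support) (hmin : G.dist u v ≤ G.dist u y) :
    y = v := by
  have hsplit := congrArg Walk.length (p.take_spec hy)
  have htake := dist_le (p.takeUntil y hy)
  rw [Walk.length_append] at hsplit
  exact (p.dropUntil y hy).eq_of_length_eq_zero (by omega)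

lemma Connected.exists_isPath_of_induce {s : Set V} (hs : (G.induce s).Connected) {a b : V}
    (ha : a ∈ s) (hb : b ∈ s) : ∃ p : G.Walk a b, p.IsPath ∧ ∀ y ∈ p.support, y ∈ s := by
  obtain ⟨p, hp⟩ := (hs ⟨a, ha⟩ ⟨b, hb⟩).exists_isPath
  refine ⟨p.map (Embedding.induce s).toHom,
    hp.map Subtype.val_injective, fun y hy => ?_⟩
  obtain ⟨z, -, rfl⟩ := List.mem_map.1 ((p.support_map _) ▸ hy)
  exact z.2

variable [DecidableEq V]

lemma IsTree.exists_append_eq_of_isMinOn (hT : G.IsTree) {C : Set V} (hC : (G.induce C).Connected)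
    {r m s : V} (hm : m ∈ C) (hmin : IsMinOn (G.dist r) C m) (hs : s ∈ C) {P : G.Walk r s}
    (hP : P.IsPath) : ∃ (p : G.Walk r m) (q : G.Walk m s),
      P = p.append q ∧ p.length = G.dist r m ∧ ∀ y ∈ q.support, y ∈ C := by
  obtain ⟨p, hp, hplen⟩ := hT.connected.exists_path_of_dist r m
  obtain ⟨q, hq, hqC⟩ := hC.exists_isPath_of_induce hm hs
  -- a shortest path to `m` meets `C` only at `m`, so `p.append q` is the unique `r`–`s` path
  have hpq : (p.append q).IsPath := hp.append hq fun y hyp hyq =>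
    Walk.eq_of_length_eq_dist_of_mem_support hplen hyp (hmin (hqC y hyq))
  exact ⟨p, q, (hT.existsUnique_path r s).unique hP hpq, hplen, hqC⟩

lemma IsTree.mem_of_isMinOn_of_dist_le (hT : G.IsTree) {C D : Set V}
    (hC : (G.induce C).Connected) (hD : (G.induce D).Connected) {r c d : V}
    (hc : c ∈ C) (hcmin : IsMinOn (G.dist r) C c) (hd : d ∈ D) (hdmin : IsMinOn (G.dist r) D d)
    (hCD : (C ∩ D).Nonempty) (hle : G.dist r d ≤ G.dist r c) : c ∈ D := by
  obtain ⟨s, hsC, hsD⟩ := hCD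
  obtain ⟨P, hP, -⟩ := hT.connected.exists_path_of_dist r s
  obtain ⟨p₁, q₁, hP₁, hp₁, -⟩ := hT.exists_append_eq_of_isMinOn hC hc hcmin hsC hP
  obtain ⟨p₂, q₂, hP₂, hp₂, hq₂D⟩ := hT.exists_append_eq_of_isMinOn hD hd hdmin hsD hP
  exact hq₂D c (Walk.mem_support_of_append_eq_append (hP₁.symm.trans hP₂) (by omega))

end SimpleGraph

lemma indepNumOn_induce_le {V : Type*} [Fintype V] (G : SimpleGraph V) {S : Set V}
    {A : Set S} {B : Set V} (h : Subtype.val '' A ⊆ B) :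
    indepNumOn (G.induce S) A ≤ indepNumOn G B := by
  classical
  refine csSup_le ⟨0, ∅, by simp, by simp [IndepSet], rfl⟩ ?_
  rintro _ ⟨s, hsA, hs, rfl⟩
  refine le_csSup ⟨Fintype.card V, ?_⟩ ⟨s.map (Function.Embedding.subtype _), ?_, ?_, s.card_map _⟩
  · rintro _ ⟨t, -, -, rfl⟩
    exact t.card_le_univ
  · simpa using (Set.image_mono hsA).trans h
  · simp only [Finset.coe_map, Function.Embedding.subtype_apply]
    rintro _ ⟨x, hx, rfl⟩ _ ⟨y, hy, rfl⟩ hxy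
    exact hs hx hy (ne_of_apply_ne _ hxy)

lemma TreeDecomp.exists_isMinOn_dist {V ι : Type*} [Finite ι] {G : SimpleGraph V}
    (td : TreeDecomp G ι) (r : ι) (v : V) :
    ∃ t, v ∈ td.bag t ∧ IsMinOn (td.tree.dist r) {t | v ∈ td.bag t} t := by
  obtain ⟨⟨t, ht⟩⟩ := (td.subtree v).nonempty
  exact Set.exists_min_image _ (td.tree.dist r) (Set.toFinite _) ⟨t, ht⟩

/-- For every graph `G`, the `α`-degeneracy of `G` is at most its
tree-independence number: for every tree-decomposition of `G` with independence number
at most `k`, every non-null induced subgraph `H = G[S]` of `G` contains a vertex `v`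
with `α(H[N_H[v]]) ≤ k`. -/
theorem stmt_7 {V : Type} [Fintype V] (G : SimpleGraph V)
    {ι : Type} [Fintype ι] (td : TreeDecomp G ι) (k : ℕ)
    (hk : ∀ t : ι, indepNumOn G (td.bag t) ≤ k)
    (S : Set V) (hS : S.Nonempty) :
    ∃ v : ↥S, indepNumOn (G.induce S) (closedNbhd (G.induce S) v) ≤ k := by
  classical
  obtain ⟨r⟩ := td.isTree.connected.nonempty
  choose top htop hmin using td.exists_isMinOn_dist r
  obtain ⟨v, hvS, hdeepest⟩ := S.exists_max_image (fun v => td.tree.dist r (top v)) S.toFinite hS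
  refine ⟨⟨v, hvS⟩, (indepNumOn_induce_le G ?_).trans (hk (top v))⟩
  rintro _ ⟨u, rfl | hadj, rfl⟩
  · exact htop v
  obtain ⟨s, hvs, hus⟩ := td.covers (induce_adj.1 hadj)
  exact td.isTree.mem_of_isMinOn_of_dist_le (td.subtree v) (td.subtree u) (htop v) (hmin v)
    (htop u) (hmin u) ⟨s, hvs, hus⟩ (hdeepest u u.2)
end

section
/- Let q and d be positive integers and let H be a bipartite graph with bipartition X, Y that contains a matching covering X, such that every vertex x ∈ X has degree at most q. If |X| > 2(d−1)q, then H contains an induced matching with d edges. -/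
open SimpleGraph

/-- The graph `dK₂`: the disjoint union of `d` copies of `K₂`. -/
def dK2 (d : ℕ) : SimpleGraph (Fin d × Fin 2) :=
  SimpleGraph.fromRel fun a b => a.1 = b.1

/-!
Write `x → x'` when `x` is adjacent to `m x'`. Since `x` is adjacent to `m x` and `m` is injective,
every `x ∈ X` has out-degree at most `q - 1`, so by double counting some `x` also has in-degree at
most `q - 1`. Choosing it and discarding it together with its at most `2q - 2` in- and
out-neighbours, a greedy choice of `d` pairwise unrelated vertices succeeds as long as
`|X| > (2q - 1)(d - 1)`. The edges `x (m x)` at the chosen vertices form an induced matching, as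
`X` and `Y` are independent.
-/

open Finset

section PairwiseNotRel

variable {α : Type*} [DecidableEq α] (R : α → α → Prop) [DecidableRel R]

theorem Finset.exists_mem_card_filter_rel_le {S : Finset α} (hS : S.Nonempty) {k : ℕ}
    (hout : ∀ y ∈ S, #{x ∈ S | y ≠ x ∧ R y x} ≤ k) :
    ∃ x ∈ S, #{y ∈ S | y ≠ x ∧ R y x} ≤ k := by
  refine exists_le_of_sum_le hS ?_
  calc ∑ x ∈ S, #{y ∈ S | y ≠ x ∧ R y x}
      = ∑ y ∈ S, #{x ∈ S | y ≠ x ∧ R y x} :=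
        (sum_card_bipartiteAbove_eq_sum_card_bipartiteBelow _).symm
    _ ≤ ∑ _y ∈ S, k := sum_le_sum hout

theorem Finset.exists_subset_card_eq_pairwise_not_rel (k d : ℕ) (S : Finset α)
    (hout : ∀ y ∈ S, #{x ∈ S | y ≠ x ∧ R y x} ≤ k) (hS : (2 * k + 1) * d ≤ #S + 2 * k) :
    ∃ T ⊆ S, #T = d ∧ (T : Set α).Pairwise fun a b => ¬ R a b := by
  induction d generalizing S with
  | zero => exact ⟨∅, empty_subset S, card_empty, by simp⟩
  | succ d ih =>
    obtain ⟨x, hxS, hin⟩ := exists_mem_card_filter_rel_le R (card_pos.mp (by nlinarith)) hout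
    set C := {y ∈ S | x ≠ y ∧ R x y} ∪ {y ∈ S | y ≠ x ∧ R y x}
    have hC : #(insert x C) ≤ 2 * k + 1 :=
      calc #(insert x C) ≤ #C + 1 := card_insert_le x C
        _ ≤ #{y ∈ S | x ≠ y ∧ R x y} + #{y ∈ S | y ≠ x ∧ R y x} + 1 := by
          gcongr; exact card_union_le _ _
        _ ≤ 2 * k + 1 := by have := hout x hxS; omega
    have hS' : (2 * k + 1) * d ≤ #(S \ insert x C) + 2 * k := by
      have := card_le_card_sdiff_add_card (s := S) (t := insert x C)
      nlinarith
    have hout' : ∀ y ∈ S \ insert x C, #{z ∈ S \ insert x C | y ≠ z ∧ R y z} ≤ k :=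
      fun y hy => (card_le_card (filter_subset_filter _ sdiff_subset)).trans
        (hout y (sdiff_subset hy))
    obtain ⟨T, hTS, rfl, hT⟩ := ih (S \ insert x C) hout' hS'
    have hfar : ∀ y ∈ T, x ≠ y ∧ ¬ R x y ∧ ¬ R y x := by
      intro y hy
      have hy' := mem_sdiff.mp (hTS hy)
      simp only [C, mem_insert, mem_union, mem_filter, not_or, not_and] at hy'
      obtain ⟨hyS, hyx, hnot_out, hnot_in⟩ := hy'
      exact ⟨Ne.symm hyx, hnot_out hyS (Ne.symm hyx), hnot_in hyS hyx⟩
    have hxT : x ∉ T := fun hx => (hfar x hx).1 rfl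
    refine ⟨insert x T, insert_subset hxS (hTS.trans sdiff_subset), card_insert_of_notMem hxT, ?_⟩
    rw [coe_insert, Set.pairwise_insert]
    exact ⟨hT, fun y hy _ => ⟨(hfar y hy).2.1, (hfar y hy).2.2⟩⟩

end PairwiseNotRel

section InducedMatching

variable {V : Type*} (H : SimpleGraph V)

theorem card_filter_adj_partner_lt_degree [Fintype V] [DecidableEq V] [DecidableRel H.Adj]
    {X : Finset V} {m : V → V} (hm : ∀ x ∈ X, H.Adj x (m x)) (hminj : Set.InjOn m X)
    {y : V} (hy : y ∈ X) : #{x ∈ X | y ≠ x ∧ H.Adj y (m x)} < H.degree y := by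
  set N := {x ∈ X | y ≠ x ∧ H.Adj y (m x)}
  have hsub : N.image m ⊆ H.neighborFinset y := by
    intro z hz
    obtain ⟨x, hx, rfl⟩ := mem_image.mp hz
    exact (H.mem_neighborFinset _ _).mpr (mem_filter.mp hx).2.2
  have hmy : m y ∉ N.image m := by
    intro hmy
    obtain ⟨x, hx, hxy⟩ := mem_image.mp hmy
    obtain ⟨hxX, hyx, -⟩ := mem_filter.mp hx
    exact hyx (hminj hy hxX hxy.symm)
  calc #N = #(N.image m) := (card_image_of_injOn (hminj.mono (filter_subset _ X))).symm
    _ < #(H.neighborFinset y) := card_lt_card ((ssubset_iff_of_subset hsub).mpr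
        ⟨m y, (H.mem_neighborFinset _ _).mpr (hm y hy), hmy⟩)
    _ = H.degree y := H.card_neighborFinset_eq_degree y

theorem nonempty_dK2_embedding {d : ℕ} (f g : Fin d → V)
    (hfg : ∀ i j, H.Adj (f i) (g j) ↔ i = j) (hf : ∀ i j, ¬ H.Adj (f i) (f j))
    (hg : ∀ i j, ¬ H.Adj (g i) (g j)) : Nonempty (dK2 d ↪g H) := by
  let φ : Fin d × Fin 2 → V := fun p => ![f p.1, g p.1] p.2
  have hφ : ∀ p q, H.Adj (φ p) (φ q) ↔ (dK2 d).Adj p q := by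
    rintro ⟨i, a⟩ ⟨j, b⟩
    simp only [dK2, fromRel_adj]
    fin_cases a <;> fin_cases b <;> simp [φ, hf, hg, hfg, H.adj_comm (g i), eq_comm]
  have hinj : Function.Injective φ := by
    rintro ⟨i, a⟩ ⟨j, b⟩ h
    fin_cases a <;> fin_cases b <;>
      simp only [φ, Fin.zero_eta, Fin.mk_one, Fin.isValue, Matrix.cons_val_zero,
        Matrix.cons_val_one, Matrix.cons_val_fin_one, Prod.mk.injEq, zero_ne_one, one_ne_zero,
        and_true, and_false] at h ⊢
    · exact ((hfg j i).1 (h ▸ (hfg i i).2 rfl)).symm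
    · exact hf j i (h ▸ (hfg j j).2 rfl)
    · exact hf i j (h ▸ (hfg i i).2 rfl)
    · exact (hfg i j).1 (h ▸ (hfg i i).2 rfl)
  exact ⟨⟨⟨φ, hinj⟩, hφ _ _⟩⟩

theorem nonempty_dK2_embedding_of_finset (T : Finset V) {m : V → V}
    (hmatch : ∀ x ∈ T, H.Adj x (m x)) (hcross : (T : Set V).Pairwise fun a b => ¬ H.Adj a (m b))
    (hT : IndepSet H T) (hmT : IndepSet H (m '' T)) : Nonempty (dK2 #T ↪g H) := by
  let e : Fin #T → T := T.equivFin.symm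
  have hfg : ∀ i j, H.Adj (e i) (m (e j)) ↔ i = j := by
    refine fun i j => ⟨fun hadj => by_contra fun hij => hcross (e i).2 (e j).2 ?_ hadj, ?_⟩
    · exact fun h => hij (T.equivFin.symm.injective (Subtype.ext h))
    · rintro rfl; exact hmatch _ (e i).2
  refine nonempty_dK2_embedding H (fun i => e i) (fun i => m (e i)) hfg
    (fun i j hadj => ?_) (fun i j hadj => ?_)
  · exact hT (e i).2 (e j).2 (H.ne_of_adj hadj) hadj
  · exact hmT ⟨_, (e i).2, rfl⟩ ⟨_, (e j).2, rfl⟩ (H.ne_of_adj hadj) hadj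

end InducedMatching

theorem stmt_10_general (q d : ℕ)
    {V : Type} [Fintype V] [DecidableEq V] (H : SimpleGraph V) [DecidableRel H.Adj]
    (X Y : Finset V)
    (hX : IndepSet H ↑X) (hY : IndepSet H ↑Y)
    (m : V → V) (hm : ∀ x ∈ X, m x ∈ Y ∧ H.Adj x (m x)) (hminj : Set.InjOn m ↑X)
    (hdeg : ∀ x ∈ X, H.degree x ≤ q)
    (hcard : 2 * (d - 1) * q < X.card) :
    Nonempty (dK2 d ↪g H) := by
  have hmatch : ∀ x ∈ X, H.Adj x (m x) := fun x hx => (hm x hx).2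
  have hout : ∀ y ∈ X, #{x ∈ X | y ≠ x ∧ H.Adj y (m x)} ≤ q - 1 := fun y hy => by
    have := card_filter_adj_partner_lt_degree H hmatch hminj hy
    have := hdeg y hy
    omega
  have hq : 1 ≤ q := by
    obtain ⟨x, hx⟩ := card_pos.mp ((Nat.zero_le _).trans_lt hcard)
    have := card_filter_adj_partner_lt_degree H hmatch hminj hx
    have := hdeg x hx
    omega
  have hsize : (2 * (q - 1) + 1) * d ≤ #X + 2 * (q - 1) := by
    rcases d with _ | d
    · simp
    · obtain ⟨q, rfl⟩ := Nat.exists_eq_add_of_le' hq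
      simp only [Nat.add_sub_cancel] at hcard ⊢
      nlinarith
  obtain ⟨T, hTX, rfl, hT⟩ :=
    exists_subset_card_eq_pairwise_not_rel (fun a b => H.Adj a (m b)) (q - 1) d X hout hsize
  exact nonempty_dK2_embedding_of_finset H T (fun x hx => hmatch x (hTX hx)) hT
    (Set.Pairwise.mono (coe_subset.mpr hTX) hX)
    (Set.Pairwise.mono (by rintro _ ⟨x, hx, rfl⟩; exact (hm x (hTX hx)).1) hY)

/-- Let `q, d` be positive integers and let `H` be a bipartite graph with
bipartition `X, Y` containing a matching covering `X`, in which every `x ∈ X` has degree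
at most `q`. If `|X| > 2(d−1)q`, then `H` contains an induced matching with `d` edges. -/
theorem stmt_10 (q d : ℕ) (hq : 0 < q) (hd : 0 < d)
    {V : Type} [Fintype V] [DecidableEq V] (H : SimpleGraph V) [DecidableRel H.Adj]
    (X Y : Finset V) (hdisj : Disjoint X Y) (hunion : X ∪ Y = Finset.univ)
    (hX : IndepSet H ↑X) (hY : IndepSet H ↑Y)
    (m : V → V) (hm : ∀ x ∈ X, m x ∈ Y ∧ H.Adj x (m x)) (hminj : Set.InjOn m ↑X)
    (hdeg : ∀ x ∈ X, H.degree x ≤ q)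
    (hcard : 2 * (d - 1) * q < X.card) :
    Nonempty (dK2 d ↪g H) :=
  stmt_10_general q d H X Y hX hY m hm hminj hdeg hcard
end

section
/- Let G be a P₅-free graph, let r ∈ V(G), and let x, y be two distinct nonadjacent neighbors of r. Then for every connected component C of G' − M, the neighborhood N(C) of C is contained in U ∪ W_xy. -/
open SimpleGraph

/-- `N_r̄(v) = N(v) \\ N[r]`: the neighbors of `v` outside the closed neighborhood of `r`. -/
def Nbar {V : Type*} (G : SimpleGraph V) (r v : V) : Set V :=
  G.neighborSet v \ closedNbhd G r

/-- `M = N(r) ∪ N_r̄(x) ∪ N_r̄(y)`. -/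
def Mset {V : Type*} (G : SimpleGraph V) (r x y : V) : Set V :=
  G.neighborSet r ∪ Nbar G r x ∪ Nbar G r y

/-- `U`: the neighbors of `r` having a neighbor outside `M ∪ {r}`. -/
def Uset {V : Type*} (G : SimpleGraph V) (r x y : V) : Set V :=
  {u ∈ G.neighborSet r | (Nbar G r u \ (Nbar G r x ∪ Nbar G r y)).Nonempty}

/-- `U₀ = {u ∈ U | u ∉ N(x) ∪ N(y)}`. -/
def U0set {V : Type*} (G : SimpleGraph V) (r x y : V) : Set V :=
  {u ∈ Uset G r x y | u ∉ G.neighborSet x ∪ G.neighborSet y}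

/-- `U_x = {u ∈ U | u ∈ N(x) \\ N(y)}`. -/
def Uxset {V : Type*} (G : SimpleGraph V) (r x y : V) : Set V :=
  {u ∈ Uset G r x y | u ∈ G.neighborSet x \ G.neighborSet y}

/-- `U_y = {u ∈ U | u ∈ N(y) \\ N(x)}`. -/
def Uyset {V : Type*} (G : SimpleGraph V) (r x y : V) : Set V :=
  {u ∈ Uset G r x y | u ∈ G.neighborSet y \ G.neighborSet x}

/-- `W_x = N_r̄(x) \\ N_r̄(y)`. -/
def Wx {V : Type*} (G : SimpleGraph V) (r x y : V) : Set V :=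
  Nbar G r x \ Nbar G r y

/-- `W_y = N_r̄(y) \\ N_r̄(x)`. -/
def Wy {V : Type*} (G : SimpleGraph V) (r x y : V) : Set V :=
  Nbar G r y \ Nbar G r x

/-- `W_xy = N_r̄(x) ∩ N_r̄(y)`. -/
def Wxy {V : Type*} (G : SimpleGraph V) (r x y : V) : Set V :=
  Nbar G r x ∩ Nbar G r y

/-- `C` is a connected component of the subgraph of `G` induced by `A`:
`C ⊆ A`, `G[C]` is connected (hence nonempty), and `C` is maximal with this property. -/
def IsCompOf {V : Type*} (G : SimpleGraph V) (A C : Set V) : Prop :=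
  C ⊆ A ∧ (G.induce C).Connected ∧
    ∀ C' : Set V, C ⊆ C' → C' ⊆ A → (G.induce C').Connected → C' = C

/-- The neighborhood of the vertex set `C` in the graph `G − r`: all vertices other than
`r`, outside of `C`, having a neighbor in `C`. -/
def nbhdIn {V : Type*} (G : SimpleGraph V) (r : V) (C : Set V) : Set V :=
  {w | w ≠ r ∧ w ∉ C ∧ ∃ c ∈ C, G.Adj c w}

/- A vertex `w` of `N(C)` lies in `M`, since otherwise it could be added to the
component `C`; let `c ∈ C` be a neighbour of `w`, so `c` is adjacent to none of `r`, `x`, `y`.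
If `w ∈ N(r)`, then `c` witnesses `w ∈ U`. If `w ∈ N_r̄(x)` but `w ∉ N(y)`, then `c w x r y` is
an induced `P₅`; hence `w ∈ W_xy`, and symmetrically for `w ∈ N_r̄(y)`. -/

section

variable {V : Type*} {G : SimpleGraph V}

def pathGraphFiveEmbedding {a b c d e : V}
    (hab : G.Adj a b) (hbc : G.Adj b c) (hcd : G.Adj c d) (hde : G.Adj d e)
    (hac : ¬G.Adj a c) (had : ¬G.Adj a d) (hae : ¬G.Adj a e)
    (hbd : ¬G.Adj b d) (hbe : ¬G.Adj b e) (hce : ¬G.Adj c e) :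
    pathGraph 5 ↪g G where
  toFun := ![a, b, c, d, e]
  inj' := by
    have : a ≠ c := fun h => had (h ▸ hcd)
    have : a ≠ d := fun h => hae (h ▸ hde)
    have : a ≠ e := fun h => had (h ▸ hde.symm)
    have : b ≠ d := fun h => hbe (h ▸ hde)
    have : b ≠ e := fun h => hbd (h ▸ hde.symm)
    have : c ≠ e := fun h => hbe (h ▸ hbc)
    intro i j hij
    fin_cases i <;> fin_cases j <;>
      simp_all [hab.ne, hbc.ne, hcd.ne, hde.ne, hab.ne.symm, hbc.ne.symm, hcd.ne.symm,
        hde.ne.symm, eq_comm]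
  map_rel_iff' := by
    intro i j
    change G.Adj (![a, b, c, d, e] i) (![a, b, c, d, e] j) ↔ _
    fin_cases i <;> fin_cases j <;> simp [pathGraph_adj, G.adj_comm, *]

theorem IsCompOf.mem_of_adj {A C : Set V} (hC : IsCompOf G A C) {c w : V} (hc : c ∈ C)
    (hw : w ∈ A) (hcw : G.Adj c w) : w ∈ C := by
  obtain ⟨hCA, hCconn, hCmax⟩ := hC
  have hconn : (G.induce (C ∪ {w})).Connected :=
    connected_induce_union hCconn.preconnected .of_subsingleton hc rfl hcw
  have hCw := hCmax (C ∪ {w}) Set.subset_union_left (Set.union_subset hCA (by simpa)) hconn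
  exact hCw ▸ Set.subset_union_right rfl

theorem notMem_singleton_union_Mset_iff {r x y c : V} :
    c ∉ {r} ∪ Mset G r x y ↔ c ∉ closedNbhd G r ∧ ¬G.Adj x c ∧ ¬G.Adj y c := by
  simp only [Mset, Nbar, closedNbhd, Set.mem_union, Set.mem_singleton_iff, Set.mem_sdiff,
    Set.mem_insert_iff, mem_neighborSet]
  tauto

theorem mem_Nbar_of_free_pathGraph_five (hP5 : _root_.Free (pathGraph 5) G) {r x y w c : V}
    (hrx : G.Adj r x) (hry : G.Adj r y) (hxy : ¬G.Adj x y) (hw : w ∈ Nbar G r x)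
    (hcw : G.Adj c w) (hcr : c ∉ closedNbhd G r) (hcx : ¬G.Adj x c) (hcy : ¬G.Adj y c) :
    w ∈ Nbar G r y := by
  obtain ⟨hxw, hwr⟩ := hw
  refine ⟨?_, hwr⟩
  by_contra hyw
  rw [mem_neighborSet] at hxw hyw
  have hrc : ¬G.Adj r c := fun h => hcr (Or.inr h)
  have hrw : ¬G.Adj r w := fun h => hwr (Or.inr h)
  rw [G.adj_comm] at hcx hcy hrc hrw hyw
  exact hP5.false (pathGraphFiveEmbedding hcw hxw.symm hrx.symm hry hcx hrc hcy hrw hyw hxy)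

end

theorem stmt_12_general {V : Type} (G : SimpleGraph V)
    (hP5 : _root_.Free (pathGraph 5) G)
    (r x y : V) (hrx : G.Adj r x) (hry : G.Adj r y) (hnadj : ¬ G.Adj x y)
    (C : Set V) (hC : IsCompOf G (({r} ∪ Mset G r x y)ᶜ) C) :
    nbhdIn G r C ⊆ Uset G r x y ∪ Wxy G r x y := by
  rintro w ⟨hwr, hwC, c, hcC, hcw⟩
  obtain ⟨hcr, hcx, hcy⟩ := notMem_singleton_union_Mset_iff.1 (hC.1 hcC)
  have hwM : w ∈ {r} ∪ Mset G r x y := by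
    by_contra hwM
    exact hwC (hC.mem_of_adj hcC hwM hcw)
  rcases hwM with rfl | (hrw | hwx) | hwy
  · exact absurd rfl hwr
  · refine Or.inl ⟨hrw, c, ⟨hcw.symm, hcr⟩, ?_⟩
    rintro (⟨hxc, -⟩ | ⟨hyc, -⟩)
    exacts [hcx hxc, hcy hyc]
  · exact Or.inr ⟨hwx, mem_Nbar_of_free_pathGraph_five hP5 hrx hry hnadj hwx hcw hcr hcx hcy⟩
  · exact Or.inr ⟨mem_Nbar_of_free_pathGraph_five hP5 hry hrx (hnadj ∘ .symm) hwy hcw hcr hcy hcx,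
      hwy⟩

/-- Let `G` be `P₅`-free, `r ∈ V(G)`, and `x, y` two distinct nonadjacent
neighbors of `r`. Then for every connected component `C` of `G' − M`, the neighborhood
`N(C)` of `C` is contained in `U ∪ W_xy`. -/
theorem stmt_12 {V : Type} [Fintype V] (G : SimpleGraph V)
    (hP5 : _root_.Free (pathGraph 5) G)
    (r x y : V) (hrx : G.Adj r x) (hry : G.Adj r y) (hxy : x ≠ y) (hnadj : ¬ G.Adj x y)
    (C : Set V) (hC : IsCompOf G (({r} ∪ Mset G r x y)ᶜ) C) :
    nbhdIn G r C ⊆ Uset G r x y ∪ Wxy G r x y :=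
  stmt_12_general G hP5 r x y hrx hry hnadj C hC
end

section
/- Let G be a P₅-free graph, let r ∈ V(G), and let x, y be two distinct nonadjacent neighbors of r. Then every connected component C of G' − M is complete to N(C) ∩ (U₀ ∪ U_x ∪ U_y). -/
open SimpleGraph

/-!
If `u ∈ U₀ ∪ U_x ∪ U_y` had both a neighbor and a non-neighbor in the component `C`, the
connectivity of `C` would give an edge `c₁c₂` of `C` with `u ∼ c₁` and `u ≁ c₂`. The vertex `u` is
adjacent to `r` and misses one of `x`, `y`, say `z`; as `C` avoids `N[r] ∪ N(x) ∪ N(y)`, the path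
`z - r - u - c₁ - c₂` is an induced `P₅`.
-/

theorem Free.false_of_induced_path_five {V : Type*} {G : SimpleGraph V}
    (hG : _root_.Free (pathGraph 5) G) {a b c d e : V}
    (hab : G.Adj a b) (hbc : G.Adj b c) (hcd : G.Adj c d) (hde : G.Adj d e)
    (hac : ¬ G.Adj a c) (had : ¬ G.Adj a d) (hae : ¬ G.Adj a e)
    (hbd : ¬ G.Adj b d) (hbe : ¬ G.Adj b e) (hce : ¬ G.Adj c e) : False := by
  set f : Fin 5 → V := ![a, b, c, d, e]
  have adj_iff : ∀ i j, G.Adj (f i) (f j) ↔ (pathGraph 5).Adj i j := by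
    intro i j
    fin_cases i <;> fin_cases j <;> simp [f, pathGraph_adj, G.adj_comm, *]
  have no_twins : ∀ i j : Fin 5,
      (∀ k, (pathGraph 5).Adj k i ↔ (pathGraph 5).Adj k j) → i = j := by
    simp only [pathGraph_adj]
    decide
  refine hG.false ⟨⟨f, fun i j hij => no_twins i j fun k => ?_⟩, adj_iff _ _⟩
  rw [← adj_iff, ← adj_iff, hij]

theorem exists_adj_of_induce_connected_of_mixed {V : Type*} {G : SimpleGraph V} {C : Set V}
    (hC : (G.induce C).Connected) {u a b : V} (ha : a ∈ C) (hb : b ∈ C)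
    (hua : G.Adj u a) (hub : ¬ G.Adj u b) :
    ∃ c₁ ∈ C, ∃ c₂ ∈ C, G.Adj c₁ c₂ ∧ G.Adj u c₁ ∧ ¬ G.Adj u c₂ := by
  obtain ⟨p⟩ := hC ⟨a, ha⟩ ⟨b, hb⟩
  obtain ⟨⟨⟨c₁, c₂⟩, h₁₂⟩, -, hu₁, hu₂⟩ := p.exists_boundary_dart {v | G.Adj u v} hua hub
  exact ⟨c₁, c₁.2, c₂, c₂.2, h₁₂, hu₁, hu₂⟩

section
variable {V : Type*} {G : SimpleGraph V} {r x y : V}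

theorem not_adj_of_notMem_Mset {d : V} (hd : d ∉ {r} ∪ Mset G r x y) :
    ¬ G.Adj r d ∧ ¬ G.Adj x d ∧ ¬ G.Adj y d := by
  simp only [Mset, Nbar, closedNbhd, Set.mem_union, Set.mem_singleton_iff, Set.mem_sdiff,
    Set.mem_insert_iff, mem_neighborSet, not_or, not_and, not_not] at hd
  obtain ⟨hdr, ⟨hrd, hx⟩, hy⟩ := hd
  exact ⟨hrd, fun h => hrd (hx h hdr), fun h => hrd (hy h hdr)⟩

theorem adj_and_not_adj_of_mem_U {u : V}
    (hu : u ∈ U0set G r x y ∪ Uxset G r x y ∪ Uyset G r x y) :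
    G.Adj r u ∧ (¬ G.Adj x u ∨ ¬ G.Adj y u) := by
  simp only [U0set, Uxset, Uyset, Uset, Set.mem_union, Set.mem_ofPred_eq, Set.mem_sdiff,
    mem_neighborSet, not_or] at hu
  rcases hu with (⟨⟨hru, -⟩, hxu, -⟩ | ⟨⟨hru, -⟩, -, hyu⟩) | ⟨⟨hru, -⟩, -, hxu⟩
  exacts [⟨hru, .inl hxu⟩, ⟨hru, .inr hyu⟩, ⟨hru, .inl hxu⟩]

end

theorem stmt_13_general {V : Type} (G : SimpleGraph V)
    (hP5 : _root_.Free (pathGraph 5) G)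
    (r x y : V) (hrx : G.Adj r x) (hry : G.Adj r y)
    (C : Set V) (hC : IsCompOf G (({r} ∪ Mset G r x y)ᶜ) C) :
    ∀ c ∈ C, ∀ u ∈ nbhdIn G r C ∩ (U0set G r x y ∪ Uxset G r x y ∪ Uyset G r x y),
      G.Adj c u := by
  rintro c hc u ⟨⟨-, -, c₀, hc₀, hc₀u⟩, hu⟩
  obtain ⟨hCM, hCconn, -⟩ := hC
  have hCnonadj : ∀ d ∈ C, ¬ G.Adj r d ∧ ¬ G.Adj x d ∧ ¬ G.Adj y d :=
    fun d hd => not_adj_of_notMem_Mset (hCM hd)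
  obtain ⟨hru, z, hrz, hzu, hzC⟩ :
      G.Adj r u ∧ ∃ z, G.Adj r z ∧ ¬ G.Adj z u ∧ ∀ d ∈ C, ¬ G.Adj z d := by
    obtain ⟨hru, hxu | hyu⟩ := adj_and_not_adj_of_mem_U hu
    · exact ⟨hru, x, hrx, hxu, fun d hd => (hCnonadj d hd).2.1⟩
    · exact ⟨hru, y, hry, hyu, fun d hd => (hCnonadj d hd).2.2⟩
  by_contra hcu
  obtain ⟨c₁, hc₁, c₂, hc₂, h₁₂, hu₁, hu₂⟩ :=
    exists_adj_of_induce_connected_of_mixed hCconn hc₀ hc hc₀u.symm (hcu ·.symm)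
  exact hP5.false_of_induced_path_five hrz.symm hru hu₁ h₁₂ hzu (hzC c₁ hc₁) (hzC c₂ hc₂)
    (hCnonadj c₁ hc₁).1 (hCnonadj c₂ hc₂).1 hu₂

/-- Let `G` be `P₅`-free, `r ∈ V(G)`, and `x, y` two distinct nonadjacent
neighbors of `r`. Then every connected component `C` of `G' − M` is complete to
`N(C) ∩ (U₀ ∪ U_x ∪ U_y)`. -/
theorem stmt_13 {V : Type} [Fintype V] (G : SimpleGraph V)
    (hP5 : _root_.Free (pathGraph 5) G)
    (r x y : V) (hrx : G.Adj r x) (hry : G.Adj r y) (hxy : x ≠ y) (hnadj : ¬ G.Adj x y)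
    (C : Set V) (hC : IsCompOf G (({r} ∪ Mset G r x y)ᶜ) C) :
    ∀ c ∈ C, ∀ u ∈ nbhdIn G r C ∩ (U0set G r x y ∪ Uxset G r x y ∪ Uyset G r x y),
      G.Adj c u :=
  stmt_13_general G hP5 r x y hrx hry C hC
end

section
/- Let G be a P₅-free graph, let r ∈ V(G), and let x, y be two distinct nonadjacent neighbors of r. Then U_x is complete to U_y, i.e., every vertex u ∈ N(r) adjacent to x but not to y and having a neighbor outside M ∪ {r} is adjacent to every vertex u' ∈ N(r) adjacent to y but not to x and having a neighbor outside M ∪ {r}. -/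
open SimpleGraph

/-!
Suppose `u ∈ U_x` and `u' ∈ U_y` are nonadjacent, and let `w`, `w'` be their neighbors outside
`M ∪ {r}`; these see none of `r`, `x`, `y`. According to whether `w u'`, `w' u` and `w w'` are
edges, one of `x-u-w-u'-y`, `y-u'-w'-u-x`, `x-u-w-w'-u'` or `w-u-r-u'-w'` is an induced `P₅`.
-/

section

variable {V : Type*} {G : SimpleGraph V}

/-- The six non-edges force the five vertices of the path to be distinct. -/
theorem Free.false_of_induced_path (hG : _root_.Free (pathGraph 5) G) {a b c d e : V}
    (hab : G.Adj a b) (hbc : G.Adj b c) (hcd : G.Adj c d) (hde : G.Adj d e)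
    (hac : ¬G.Adj a c) (had : ¬G.Adj a d) (hae : ¬G.Adj a e)
    (hbd : ¬G.Adj b d) (hbe : ¬G.Adj b e) (hce : ¬G.Adj c e) : False := by
  have nac : a ≠ c := by rintro rfl; exact had hcd
  have nad : a ≠ d := by rintro rfl; exact hac hcd.symm
  have nae : a ≠ e := by rintro rfl; exact had hde.symm
  have nbd : b ≠ d := by rintro rfl; exact had hab
  have nbe : b ≠ e := by rintro rfl; exact hbd hde.symm
  have nce : c ≠ e := by rintro rfl; exact hbe hbc
  have nab := hab.ne; have nbc := hbc.ne; have ncd := hcd.ne; have nde := hde.ne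
  have hinj : Function.Injective ![a, b, c, d, e] := by
    intro i j h
    fin_cases i <;> fin_cases j <;> simp_all
  refine hG.false ⟨⟨_, hinj⟩, fun {i j} => ?_⟩
  fin_cases i <;> fin_cases j <;> simp_all [pathGraph_adj, eq_comm, G.adj_comm]

theorem exists_adj_of_mem_Uset {r x y u : V} (hu : u ∈ Uset G r x y) :
    ∃ w, G.Adj u w ∧ ¬G.Adj r w ∧ ¬G.Adj x w ∧ ¬G.Adj y w := by
  obtain ⟨-, w, ⟨huw, hw⟩, hwxy⟩ := hu
  have hrw : ¬G.Adj r w := fun h => hw (Set.mem_insert_of_mem _ h)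
  simp only [Nbar, Set.mem_union, Set.mem_sdiff, mem_neighborSet, not_or] at hwxy
  exact ⟨w, huw, hrw, fun h => hwxy.1 ⟨h, hw⟩, fun h => hwxy.2 ⟨h, hw⟩⟩

theorem Free.adj_of_private_neighbors (hG : _root_.Free (pathGraph 5) G) {r x y u u' w w' : V}
    (hxy : ¬G.Adj x y) (hru : G.Adj r u) (hru' : G.Adj r u')
    (hxu : G.Adj x u) (hyu : ¬G.Adj y u) (hyu' : G.Adj y u') (hxu' : ¬G.Adj x u')
    (huw : G.Adj u w) (hrw : ¬G.Adj r w) (hxw : ¬G.Adj x w) (hyw : ¬G.Adj y w)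
    (hu'w' : G.Adj u' w') (hrw' : ¬G.Adj r w') (hxw' : ¬G.Adj x w') (hyw' : ¬G.Adj y w') :
    G.Adj u u' := by
  by_contra huu'
  by_cases hwu' : G.Adj w u'
  · exact hG.false_of_induced_path hxu huw hwu' hyu'.symm hxw hxu' hxy huu'
      (fun h => hyu h.symm) (fun h => hyw h.symm)
  by_cases hw'u : G.Adj w' u
  · exact hG.false_of_induced_path hyu' hu'w' hw'u hxu.symm hyw' hyu (fun h => hxy h.symm)
      (fun h => huu' h.symm) (fun h => hxu' h.symm) (fun h => hxw' h.symm)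
  by_cases hww' : G.Adj w w'
  · exact hG.false_of_induced_path hxu huw hww' hu'w'.symm hxw hxw' hxu'
      (fun h => hw'u h.symm) huu' hwu'
  · exact hG.false_of_induced_path huw.symm hru.symm hru' hu'w' (fun h => hrw h.symm) hwu' hww'
      huu' (fun h => hw'u h.symm) hrw'

end

theorem stmt_16_general {V : Type} (G : SimpleGraph V)
    (hP5 : _root_.Free (pathGraph 5) G)
    (r x y : V) (hnadj : ¬ G.Adj x y) :
    ∀ u ∈ Uxset G r x y, ∀ u' ∈ Uyset G r x y, G.Adj u u' := by
  rintro u ⟨hu, hxu, hyu⟩ u' ⟨hu', hyu', hxu'⟩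
  obtain ⟨w, huw, hrw, hxw, hyw⟩ := exists_adj_of_mem_Uset hu
  obtain ⟨w', hu'w', hrw', hxw', hyw'⟩ := exists_adj_of_mem_Uset hu'
  exact hP5.adj_of_private_neighbors hnadj hu.1 hu'.1 hxu hyu hyu' hxu'
    huw hrw hxw hyw hu'w' hrw' hxw' hyw'

/-- Let `G` be `P₅`-free, `r ∈ V(G)`, and `x, y` two distinct nonadjacent
neighbors of `r`. Then `U_x` is complete to `U_y`. -/
theorem stmt_16 {V : Type} [Fintype V] (G : SimpleGraph V)
    (hP5 : _root_.Free (pathGraph 5) G)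
    (r x y : V) (hrx : G.Adj r x) (hry : G.Adj r y) (hxy : x ≠ y) (hnadj : ¬ G.Adj x y) :
    ∀ u ∈ Uxset G r x y, ∀ u' ∈ Uyset G r x y, G.Adj u u' :=
  stmt_16_general G hP5 r x y hnadj
end
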